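/- arXiv:2201.12610 — 11 statements merged into one kernel-verified Lean document; each statement's English description precedes it below -/
import Mathlib

section
/- Let B and B' be bicliques of a graph G with nonempty intersection, and let v be a vertex of B such that B' ∪ {v} is not a biclique. Then there exists a vertex w in B' \ B such that for every x in B ∩ B', the set {v, x, w} is not a biclique of G (in particular, (B ∩ B') ∪ {v, w} is not a biclique). -/
/-- A biclique of a graph `G` is a set of vertices inducing a complete bipartite graph,
where edgeless graphs are regarded as complete bipartite. -/
def IsBiclique {V : Type*} (G : SimpleGraph V) (s : Set V) : Prop :=
  ∃ X Y : Set V, X ∪ Y = s ∧ Disjoint X Y ∧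
    (∀ a ∈ X, ∀ b ∈ X, ¬ G.Adj a b) ∧
    (∀ a ∈ Y, ∀ b ∈ Y, ¬ G.Adj a b) ∧
    (∀ a ∈ X, ∀ b ∈ Y, G.Adj a b)

lemma biclique_subset {V : Type*} {G : SimpleGraph V} {s t : Set V}
    (h : IsBiclique G t) (hst : s ⊆ t) : IsBiclique G s := by
  obtain ⟨X, Y, hu, hd, hX, hY, hXY⟩ := h
  exact ⟨X ∩ s, Y ∩ s,
    by rw [← Set.union_inter_distrib_right, hu, Set.inter_eq_right.2 hst],
    hd.mono Set.inter_subset_left Set.inter_subset_left,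
    fun a ha b hb => hX a ha.1 b hb.1, fun a ha b hb => hY a ha.1 b hb.1,
    fun a ha b hb => hXY a ha.1 b hb.1⟩

lemma biclique_key {V : Type*} {G : SimpleGraph V} {s : Set V} (hs : IsBiclique G s)
    {a b c : V} (ha : a ∈ s) (hb : b ∈ s) (hc : c ∈ s) :
    (G.Adj a c ↔ (G.Adj a b ↔ ¬ G.Adj b c)) := by
  obtain ⟨X, Y, hu, hd, hX, hY, hXY⟩ := hs
  rw [← hu] at ha hb hc
  have hd' : ∀ ⦃p⦄, p ∈ X → p ∉ Y := fun p hp => Set.disjoint_left.mp hd hp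
  have f : ∀ p q, p ∈ X ∪ Y → q ∈ X ∪ Y → (G.Adj p q ↔ ((p ∈ X) ↔ (q ∈ Y))) := by
    intro p q hp hq
    rcases hp with hp | hp <;> rcases hq with hq | hq
    · have h1 : ¬ G.Adj p q := hX p hp q hq
      have h2 : q ∉ Y := hd' hq
      tauto
    · have h1 : G.Adj p q := hXY p hp q hq
      tauto
    · have h1 : G.Adj p q := (G.adj_comm _ _).mp (hXY q hq p hp)
      have h2 : p ∉ X := fun h => hd' h hp
      have h3 : q ∉ Y := hd' hq
      tauto
    · have h1 : ¬ G.Adj p q := hY p hp q hq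
      have h2 : p ∉ X := fun h => hd' h hp
      tauto
  rw [f a c ha hc, f a b ha hb, f b c hb hc]
  have gb : (b ∈ X ↔ ¬ b ∈ Y) := by
    rcases hb with h | h
    · exact ⟨fun _ => hd' h, fun _ => h⟩
    · exact ⟨fun hx => absurd h (hd' hx), fun hn => absurd h hn⟩
  tauto

lemma biclique_insert_aux {V : Type*} {G : SimpleGraph V} {s : Set V} (X Y : Set V)
    (hu : X ∪ Y = s) (hd : Disjoint X Y)
    (hX : ∀ a ∈ X, ∀ b ∈ X, ¬ G.Adj a b) (hY : ∀ a ∈ Y, ∀ b ∈ Y, ¬ G.Adj a b)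
    (hXY : ∀ a ∈ X, ∀ b ∈ Y, G.Adj a b)
    {z v : V} (hz : z ∈ X) (hvs : v ∉ s)
    (hvw : ∀ w ∈ s, (G.Adj v w ↔ (G.Adj v z ↔ ¬ G.Adj z w))) :
    IsBiclique G (s ∪ {v}) := by
  have hvX : v ∉ X := fun h => hvs (hu ▸ Or.inl h)
  have hvY : v ∉ Y := fun h => hvs (hu ▸ Or.inr h)
  by_cases hvz : G.Adj v z
  · -- v is adjacent to everything in X, nonadjacent to Y: put v on the Y side
    have hAX : ∀ w ∈ X, G.Adj v w := by
      intro w hw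
      have h1 := hvw w (hu ▸ Or.inl hw)
      have h2 := hX z hz w hw
      tauto
    have hAY : ∀ w ∈ Y, ¬ G.Adj v w := by
      intro w hw
      have h1 := hvw w (hu ▸ Or.inr hw)
      have h2 := hXY z hz w hw
      tauto
    refine ⟨X, Y ∪ {v}, by rw [← Set.union_assoc, hu], ?_, hX, ?_, ?_⟩
    · exact Set.disjoint_union_right.2 ⟨hd, Set.disjoint_singleton_right.2 hvX⟩
    · intro a ha b hb
      rcases ha with ha | ha <;> rcases hb with hb | hb
      · exact hY a ha b hb
      · rw [Set.mem_singleton_iff] at hb; subst hb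
        exact fun h => hAY a ha ((G.adj_comm _ _).mp h)
      · rw [Set.mem_singleton_iff] at ha; subst ha
        exact hAY b hb
      · rw [Set.mem_singleton_iff] at ha hb; subst ha; subst hb
        exact G.irrefl
    · intro a ha b hb
      rcases hb with hb | hb
      · exact hXY a ha b hb
      · rw [Set.mem_singleton_iff] at hb; subst hb
        exact (G.adj_comm _ _).mp (hAX a ha)
  · -- v is nonadjacent to everything in X, adjacent to Y: put v on the X side
    have hNX : ∀ w ∈ X, ¬ G.Adj v w := by
      intro w hw
      have h1 := hvw w (hu ▸ Or.inl hw)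
      have h2 := hX z hz w hw
      tauto
    have hAY : ∀ w ∈ Y, G.Adj v w := by
      intro w hw
      have h1 := hvw w (hu ▸ Or.inr hw)
      have h2 := hXY z hz w hw
      tauto
    refine ⟨X ∪ {v}, Y, by rw [Set.union_comm X {v}, Set.union_assoc, hu, Set.union_comm], ?_, ?_, hY, ?_⟩
    · exact Set.disjoint_union_left.2 ⟨hd, Set.disjoint_singleton_left.2 hvY⟩
    · intro a ha b hb
      rcases ha with ha | ha <;> rcases hb with hb | hb
      · exact hX a ha b hb
      · rw [Set.mem_singleton_iff] at hb; subst hb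
        exact fun h => hNX a ha ((G.adj_comm _ _).mp h)
      · rw [Set.mem_singleton_iff] at ha; subst ha
        exact hNX b hb
      · rw [Set.mem_singleton_iff] at ha hb; subst ha; subst hb
        exact G.irrefl
    · intro a ha b hb
      rcases ha with ha | ha
      · exact hXY a ha b hb
      · rw [Set.mem_singleton_iff] at ha; subst ha
        exact hAY b hb

lemma biclique_clone {V : Type*} {G : SimpleGraph V} {s : Set V} (hs : IsBiclique G s)
    {z v : V} (hz : z ∈ s)
    (hvw : ∀ w ∈ s, (G.Adj v w ↔ (G.Adj v z ↔ ¬ G.Adj z w))) :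
    IsBiclique G (s ∪ {v}) := by
  by_cases hvs : v ∈ s
  · have e : s ∪ {v} = s := by rw [Set.union_singleton, Set.insert_eq_self.2 hvs]
    rwa [e]
  obtain ⟨X, Y, hu, hd, hX, hY, hXY⟩ := hs
  rw [← hu] at hz
  rcases hz with hz | hz
  · exact biclique_insert_aux X Y hu hd hX hY hXY hz hvs hvw
  · exact biclique_insert_aux Y X (by rw [Set.union_comm, hu]) hd.symm hY hX
      (fun a ha b hb => (G.adj_comm _ _).mp (hXY b hb a ha)) hz hvs hvw

set_option maxHeartbeats 1000000 in
/-- If `B` and `B'` are bicliques of `G` with nonempty intersection and `v ∈ B` is such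
that `B' ∪ {v}` is not a biclique, then there is `w ∈ B' \ B` such that `{v, x, w}` is not
a biclique for any `x ∈ B ∩ B'`; in particular `(B ∩ B') ∪ {v, w}` is not a biclique. -/
theorem stmt2 {V : Type*} [Fintype V] (G : SimpleGraph V) (B B' : Set V)
    (hB : IsBiclique G B) (hB' : IsBiclique G B') (hint : (B ∩ B').Nonempty)
    (v : V) (hv : v ∈ B) (hnb : ¬ IsBiclique G (B' ∪ {v})) :
    ∃ w ∈ B' \ B, (∀ x ∈ B ∩ B', ¬ IsBiclique G {v, x, w}) ∧
      ¬ IsBiclique G ((B ∩ B') ∪ {v, w}) := by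
  obtain ⟨z, hzB, hzB'⟩ := hint
  have hex : ∃ w ∈ B', ¬ (G.Adj v w ↔ (G.Adj v z ↔ ¬ G.Adj z w)) := by
    by_contra h
    push_neg at h
    exact hnb (biclique_clone hB' hzB' h)
  obtain ⟨w, hwB', hw⟩ := hex
  have hwB : w ∉ B := fun hwB => hw (biclique_key hB hv hzB hwB)
  have hkey : ∀ x ∈ B ∩ B', ¬ IsBiclique G {v, x, w} := by
    intro x hx hbic
    have h1 : G.Adj v w ↔ (G.Adj v x ↔ ¬ G.Adj x w) :=
      biclique_key hbic (by simp) (by simp) (by simp)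
    have h2 : G.Adj v x ↔ (G.Adj v z ↔ ¬ G.Adj z x) := biclique_key hB hv hzB hx.1
    have h3 : G.Adj x w ↔ (G.Adj x z ↔ ¬ G.Adj z w) := biclique_key hB' hx.2 hzB' hwB'
    rw [G.adj_comm x z] at h3
    apply hw
    rw [h1, h2, h3]
    tauto
  refine ⟨w, ⟨hwB', hwB⟩, hkey, fun hbic => hkey z ⟨hzB, hzB'⟩ (biclique_subset hbic ?_)⟩
  intro a ha
  simp only [Set.mem_insert_iff, Set.mem_singleton_iff] at ha
  simp only [Set.mem_union, Set.mem_insert_iff, Set.mem_singleton_iff, Set.mem_inter_iff]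
  rcases ha with rfl | rfl | rfl
  · exact Or.inr (Or.inl rfl)
  · exact Or.inl ⟨hzB, hzB'⟩
  · exact Or.inr (Or.inr rfl)
end

section
/- For positive integers p and q, a hypergraph H is (p,q)-Helly if and only if Φ_q(H) is p-Helly (i.e., (p,1)-Helly). -/
/-!
An edge `E` contains a `q`-set `x` iff `x ∈ φ_q(E)`, so for a nonempty family `S` the core of
`{φ_q(E) : E ∈ S}` is the family of `q`-subsets of the core of `S`. Hence that core is nonempty
exactly when the core of `S` has at least `q` elements, and `(p,q)`-intersecting subfamilies of `H`
correspond to `(p,1)`-intersecting subfamilies of `Φ_q(H)`. The edges of `H` with fewer than `q`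
vertices, which `Φ_q` drops, never lie in a `(p,q)`-intersecting family since `p ≥ 1`.
-/

/-- The core of a family of sets: the elements lying in all members (and in at least one,
so that the core of the empty family is empty, matching that the vertex set of a
hypergraph is the union of its edges).  For a nonempty family this is just the
intersection of all members. -/
def hCore {β : Type*} (F : Finset (Finset β)) : Set β :=
  {x | (∃ E ∈ F, x ∈ E) ∧ ∀ E ∈ F, x ∈ E}

/-- A family is `(p,q)`-intersecting if every nonempty subfamily of at most `p` sets
has core of cardinality at least `q`. -/
def IsIntersecting {β : Type*} (p q : ℕ) (F : Finset (Finset β)) : Prop :=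
  ∀ F' ⊆ F, F'.Nonempty → F'.card ≤ p → q ≤ (hCore F').ncard

/-- A family is `(p,q)`-Helly if every nonempty `(p,q)`-intersecting subfamily
has core of cardinality at least `q`. -/
def IsHelly {β : Type*} (p q : ℕ) (F : Finset (Finset β)) : Prop :=
  ∀ F' ⊆ F, F'.Nonempty → IsIntersecting p q F' → q ≤ (hCore F').ncard
/-- The hypergraph `Φ_q(H)`: its vertices are the `q`-subsets of vertices of `H` contained
in some edge, and its edges are the families `φ_q(E)` of all `q`-subsets of `E`, for edges
`E` of `H` with at least `q` elements. -/
def Phi {α : Type*} [DecidableEq α] (q : ℕ) (H : Finset (Finset α)) :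
    Finset (Finset (Finset α)) :=
  (H.filter fun E => q ≤ E.card).image fun E => Finset.powersetCard q E

open Finset

lemma hCore_eq_inf' {β : Type*} [DecidableEq β] {S : Finset (Finset β)} (hS : S.Nonempty) :
    hCore S = ↑(S.inf' hS id) := by
  ext x
  simp only [hCore, Set.mem_ofPred_eq, mem_coe, mem_inf', id]
  exact ⟨And.right, fun h => ⟨hS.elim fun E hE => ⟨E, hE, h E hE⟩, h⟩⟩

lemma hCore_singleton {β : Type*} (E : Finset β) : hCore {E} = ↑E := by
  classical
  rw [hCore_eq_inf' (singleton_nonempty E), inf'_singleton, id]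

section PowersetCard

variable {α : Type*} [DecidableEq α] {q : ℕ}

lemma hCore_image_powersetCard {S : Finset (Finset α)} (hS : S.Nonempty) :
    hCore (S.image (powersetCard q)) = ↑(powersetCard q (S.inf' hS id)) := by
  ext x
  simp only [hCore_eq_inf' (hS.image _), mem_coe, mem_inf', forall_mem_image, id,
    mem_powersetCard, subset_iff]
  grind

lemma one_le_ncard_hCore_image_powersetCard_iff {S : Finset (Finset α)} (hS : S.Nonempty) :
    1 ≤ (hCore (S.image (powersetCard q))).ncard ↔ q ≤ (hCore S).ncard := by
  rw [hCore_image_powersetCard hS, hCore_eq_inf' hS, Set.ncard_coe_finset, Set.ncard_coe_finset,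
    one_le_card, powersetCard_nonempty]

lemma exists_subset_image_eq_card_le {β γ : Type*} [DecidableEq γ] {f : β → γ}
    {S : Finset β} {G : Finset γ} (hG : G ⊆ S.image f) :
    ∃ T ⊆ S, T.image f = G ∧ T.card ≤ G.card := by
  obtain ⟨T, hTS, hinj, rfl⟩ := exists_subset_injOn_image_eq_of_surjOn (S : Set β) G
    (by simpa [Set.SurjOn] using coe_subset.2 hG)
  exact ⟨T, coe_subset.1 hTS, rfl, (card_image_of_injOn hinj).ge⟩

lemma isIntersecting_image_powersetCard_iff (p : ℕ) (S : Finset (Finset α)) :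
    IsIntersecting p 1 (S.image (powersetCard q)) ↔ IsIntersecting p q S := by
  constructor
  · intro h T hTS hT hTp
    rw [← one_le_ncard_hCore_image_powersetCard_iff hT]
    exact h _ (image_subset_image hTS) (hT.image _) (card_image_le.trans hTp)
  · intro h G hGS hG hGp
    obtain ⟨T, hTS, rfl, hTG⟩ := exists_subset_image_eq_card_le hGS
    have hT : T.Nonempty := image_nonempty.1 hG
    rw [one_le_ncard_hCore_image_powersetCard_iff hT]
    exact h T hTS hT (hTG.trans hGp)

end PowersetCard

lemma IsIntersecting.le_card {β : Type*} {p q : ℕ} (hp : 0 < p) {F : Finset (Finset β)}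
    (hF : IsIntersecting p q F) {E : Finset β} (hE : E ∈ F) : q ≤ E.card := by
  simpa [hCore_singleton] using hF {E} (singleton_subset_iff.2 hE) (singleton_nonempty E)
    (by rwa [card_singleton])

theorem stmt6_general {α : Type*} [DecidableEq α] (p q : ℕ) (hp : 0 < p)
    (H : Finset (Finset α)) :
    IsHelly p q H ↔ IsHelly p 1 (Phi q H) := by
  constructor
  · intro hH G hGΦ hG hGint
    obtain ⟨S, hSH, rfl⟩ := subset_image_iff.1 hGΦ
    have hS : S.Nonempty := image_nonempty.1 hG
    rw [isIntersecting_image_powersetCard_iff] at hGint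
    rw [one_le_ncard_hCore_image_powersetCard_iff hS]
    exact hH S (hSH.trans (filter_subset _ _)) hS hGint
  · intro hΦ F hFH hF hFint
    have hFΦ : F.image (powersetCard q) ⊆ Phi q H :=
      image_subset_image fun E hE => mem_filter.2 ⟨hFH hE, hFint.le_card hp hE⟩
    rw [← one_le_ncard_hCore_image_powersetCard_iff hF]
    exact hΦ _ hFΦ (hF.image _) ((isIntersecting_image_powersetCard_iff p F).2 hFint)

/-- For positive integers `p` and `q`, a hypergraph `H` is `(p,q)`-Helly iff `Φ_q(H)`
is `p`-Helly, i.e. `(p,1)`-Helly. -/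
theorem stmt6 {α : Type*} [DecidableEq α] (p q : ℕ) (hp : 0 < p) (hq : 0 < q)
    (H : Finset (Finset α)) (hne : ∀ E ∈ H, E.Nonempty) :
    IsHelly p q H ↔ IsHelly p 1 (Phi q H) :=
  stmt6_general p q hp H
end

section
/- Let p and q be positive integers and let S be a family of p+1 pairwise distinct q-subsets of the vertex set of a hypergraph H. If some support set of S (a union of all but exactly one member of S) is contained in no edge of H, then the family of edges of H containing at least one support set of S is either empty or its core contains some member of S. -/
/-- The support set of the member `T` of a `(p+1,q)`-basis `S`: the union of all
members of `S` other than `T`. -/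
def suppSet {α : Type*} [DecidableEq α] (S : Finset (Finset α)) (T : Finset α) :
    Finset α :=
  (S.erase T).sup id

/-- `H_S^∪`: the partial hypergraph of `H` formed by the edges containing at least one
support set of the basis `S`. -/
def Hcup {α : Type*} [DecidableEq α] (H S : Finset (Finset α)) : Finset (Finset α) :=
  H.filter fun E => ∃ T ∈ S, suppSet S T ⊆ E

/-- If `S` is a trivial `(p+1,q)`-basis of `H` (some support set of `S` is contained in
no edge of `H`), then `H_S^∪` is empty or its core contains some member of `S`. -/
theorem stmt7 {α : Type*} [DecidableEq α] (p q : ℕ) (hp : 0 < p) (hq : 0 < q)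
    (H : Finset (Finset α)) (hne : ∀ E ∈ H, E.Nonempty)
    (S : Finset (Finset α)) (hScard : S.card = p + 1)
    (hSq : ∀ T ∈ S, T.card = q)
    (hSV : ∀ T ∈ S, ∀ x ∈ T, ∃ E ∈ H, x ∈ E)
    (htriv : ∃ T ∈ S, ∀ E ∈ H, ¬ suppSet S T ⊆ E) :
    Hcup H S = ∅ ∨ ∃ T ∈ S, ↑T ⊆ hCore (Hcup H S) := by
  obtain ⟨T₀, hT₀S, hT₀⟩ := htriv
  have key : ∀ E ∈ Hcup H S, T₀ ⊆ E := by
    intro E hE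
    simp only [Hcup, Finset.mem_filter] at hE
    obtain ⟨hEH, T, hTS, hsub⟩ := hE
    have hTne : T ≠ T₀ := by
      rintro rfl; exact hT₀ E hEH hsub
    have : T₀ ⊆ suppSet S T :=
      Finset.le_sup (f := id) (Finset.mem_erase.mpr ⟨hTne.symm, hT₀S⟩)
    exact this.trans hsub
  rcases eq_or_ne (Hcup H S) ∅ with h | h
  · exact Or.inl h
  · refine Or.inr ⟨T₀, hT₀S, fun x hx => ?_⟩
    obtain ⟨E, hE⟩ := Finset.nonempty_iff_ne_empty.mpr h
    exact ⟨⟨E, hE, key E hE hx⟩, fun F hF => key F hF hx⟩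
end

section
/- For positive integers p and q, a hypergraph H is (p,q)-Helly if and only if for every nontrivial (p+1,q)-basis S of H, the core of H_S^∪ has cardinality at least q. -/
lemma hCore_finite {β : Type*} {F : Finset (Finset β)} (h : F.Nonempty) :
    (hCore F).Finite := by
  obtain ⟨E, hE⟩ := h
  exact E.finite_toSet.subset (fun x hx => hx.2 E hE)

lemma coe_subset_hCore {β : Type*} {F : Finset (Finset β)} (hne : F.Nonempty) {T : Finset β}
    (h : ∀ E ∈ F, T ⊆ E) : ↑T ⊆ hCore F := by
  intro x hx
  exact ⟨⟨hne.choose, hne.choose_spec, h _ hne.choose_spec hx⟩, fun E hE => h E hE hx⟩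

lemma le_ncard_hCore {β : Type*} {q : ℕ} {F : Finset (Finset β)} (hne : F.Nonempty) {T : Finset β}
    (hcard : T.card = q) (h : ∀ E ∈ F, T ⊆ E) : q ≤ (hCore F).ncard := by
  calc q = (↑T : Set β).ncard := by rw [Set.ncard_coe_finset, hcard]
  _ ≤ _ := Set.ncard_le_ncard (coe_subset_hCore hne h) (hCore_finite hne)

lemma hCore_anti {β : Type*} {F G : Finset (Finset β)} (hFG : F ⊆ G) (hne : F.Nonempty) :
    hCore G ⊆ hCore F := by
  intro x hx
  exact ⟨⟨hne.choose, hne.choose_spec, hx.2 _ (hFG hne.choose_spec)⟩,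
    fun E hE => hx.2 E (hFG hE)⟩

lemma hCore_subset_edge {β : Type*} {F : Finset (Finset β)} {E : Finset β} (hE : E ∈ F) :
    hCore F ⊆ ↑E := fun _ hx => hx.2 E hE

lemma exists_q_subset {β : Type*} {q : ℕ} {s : Set β} (hfin : s.Finite) (h : q ≤ s.ncard) :
    ∃ T : Finset β, ↑T ⊆ s ∧ T.card = q := by
  obtain ⟨t, hts, hcard⟩ := Finset.exists_subset_card_eq
    (show q ≤ hfin.toFinset.card by rwa [Set.ncard_eq_toFinset_card _ hfin] at h)
  exact ⟨t, by simpa using (Finset.coe_subset.mpr hts).trans hfin.coe_toFinset.subset, hcard⟩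

lemma back_aux {α : Type*} [DecidableEq α] (p q : ℕ) (hp : 0 < p)
    (H : Finset (Finset α))
    (hrhs : ∀ S : Finset (Finset α), S.card = p + 1 → (∀ T ∈ S, T.card = q) →
        (∀ T ∈ S, ∀ x ∈ T, ∃ E ∈ H, x ∈ E) →
        (∀ T ∈ S, ∃ E ∈ H, suppSet S T ⊆ E) →
        q ≤ (hCore (Hcup H S)).ncard) :
    ∀ n (F' : Finset (Finset α)), F'.card ≤ n → F' ⊆ H → F'.Nonempty →
      IsIntersecting p q F' → q ≤ (hCore F').ncard := by
  intro n
  induction n with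
  | zero =>
    intro F' hc hsub hne hint
    rw [Nat.le_zero, Finset.card_eq_zero] at hc
    exact absurd hc hne.ne_empty
  | succ n ih =>
    intro F' hc hsub hne hint
    by_cases hsmall : F'.card ≤ p
    · exact hint F' (Finset.Subset.refl F') hne hsmall
    push_neg at hsmall
    classical
    obtain ⟨P, hPsub, hPcard⟩ := Finset.exists_subset_card_eq hsmall
    have h2 : 2 ≤ F'.card := le_trans (by omega) hsmall
    have hT : ∀ E ∈ P, ∃ T : Finset α, ↑T ⊆ hCore (F'.erase E) ∧ T.card = q := by
      intro E hE
      have hEF : E ∈ F' := hPsub hE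
      have hGne : (F'.erase E).Nonempty := by
        rw [← Finset.card_pos, Finset.card_erase_of_mem hEF]; omega
      have hq' : q ≤ (hCore (F'.erase E)).ncard := by
        apply ih (F'.erase E) (by rw [Finset.card_erase_of_mem hEF]; omega)
          ((Finset.erase_subset _ _).trans hsub) hGne
        intro G hG hGne' hGcard
        exact hint G (hG.trans (Finset.erase_subset _ _)) hGne' hGcard
      exact exists_q_subset (hCore_finite hGne) hq'
    -- choice function picking the q-subset of each core
    let t : Finset α → Finset α := fun E =>
      if h : ∃ T : Finset α, ↑T ⊆ hCore (F'.erase E) ∧ T.card = q then h.choose else ∅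
    have ht : ∀ E ∈ P, ↑(t E) ⊆ hCore (F'.erase E) ∧ (t E).card = q := by
      intro E hE
      have hx := hT E hE
      simp only [t, dif_pos hx]
      exact hx.choose_spec
    -- t E is a subset of every edge other than E
    have htsub : ∀ E ∈ P, ∀ E' ∈ F', E' ≠ E → t E ⊆ E' := by
      intro E hE E' hE' hne'
      have : ↑(t E) ⊆ (↑E' : Set α) :=
        (ht E hE).1.trans (hCore_subset_edge (Finset.mem_erase.mpr ⟨hne', hE'⟩))
      exact_mod_cast this
    by_cases hinj : ∀ E₁ ∈ P, ∀ E₂ ∈ P, t E₁ = t E₂ → E₁ = E₂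
    · -- injective case: build the basis S
      set S : Finset (Finset α) := P.image t with hS
      have hScard : S.card = p + 1 := by
        rw [hS, Finset.card_image_of_injOn (fun E₁ h₁ E₂ h₂ => hinj E₁ h₁ E₂ h₂), hPcard]
      have hmemS : ∀ T ∈ S, ∃ E ∈ P, t E = T := by
        intro T hT'
        simpa using Finset.mem_image.mp hT'
      -- each support set is contained in the corresponding edge
      have hsupp : ∀ E ∈ P, suppSet S (t E) ⊆ E := by
        intro E hE
        rw [suppSet]
        have hle : (S.erase (t E)).sup id ≤ E := by
          apply Finset.sup_le
          intro T' hT'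
          obtain ⟨hT'ne, hT'S⟩ := Finset.mem_erase.mp hT'
          obtain ⟨E'', hE'', rfl⟩ := hmemS T' hT'S
          have hEE : E ≠ E'' := fun h => hT'ne (by rw [h])
          exact htsub E'' hE'' E (hPsub hE) hEE
        exact hle
      have key := hrhs S hScard
        (by
          intro T hT'
          obtain ⟨E, hE, rfl⟩ := hmemS T hT'
          exact (ht E hE).2)
        (by
          intro T hT' x hx
          obtain ⟨E, hE, rfl⟩ := hmemS T hT'
          obtain ⟨E', hE', hxE'⟩ := ((ht E hE).1 hx).1
          exact ⟨E', hsub ((Finset.erase_subset _ _) hE'), hxE'⟩)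
        (by
          intro T hT'
          obtain ⟨E, hE, rfl⟩ := hmemS T hT'
          exact ⟨E, hsub (hPsub hE), hsupp E hE⟩)
      -- F' ⊆ Hcup H S, so core of Hcup is contained in core of F'
      have hF'sub : F' ⊆ Hcup H S := by
        intro E' hE'
        rw [Hcup, Finset.mem_filter]
        refine ⟨hsub hE', ?_⟩
        by_cases hE'P : E' ∈ P
        · exact ⟨t E', Finset.mem_image_of_mem t hE'P, hsupp E' hE'P⟩
        · have hPne : P.Nonempty := by rw [← Finset.card_pos, hPcard]; omega
          obtain ⟨E₀, hE₀⟩ := hPne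
          refine ⟨t E₀, Finset.mem_image_of_mem t hE₀, ?_⟩
          rw [suppSet]
          have hle : (S.erase (t E₀)).sup id ≤ E' := by
            apply Finset.sup_le
            intro T' hT'
            obtain ⟨E'', hE'', rfl⟩ := hmemS T' (Finset.mem_of_mem_erase hT')
            exact htsub E'' hE'' E' hE' (fun h => hE'P (h ▸ hE''))
          exact hle
      calc q ≤ (hCore (Hcup H S)).ncard := key
      _ ≤ (hCore F').ncard :=
          Set.ncard_le_ncard (hCore_anti hF'sub hne) (hCore_finite hne)
    · -- two equal q-subsets: their common value is in the core of F'
      push_neg at hinj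
      obtain ⟨E₁, hE₁, E₂, hE₂, hteq, hne12⟩ := hinj
      apply le_ncard_hCore hne (ht E₁ hE₁).2
      intro E hE
      by_cases h1 : E = E₁
      · subst h1
        rw [hteq]
        exact htsub E₂ hE₂ E hE hne12
      · exact htsub E₁ hE₁ E hE h1

/-- A hypergraph `H` is `(p,q)`-Helly iff for every nontrivial `(p+1,q)`-basis `S` of `H`
(a family of `p+1` pairwise distinct `q`-subsets of the vertex set each of whose support
sets is contained in some edge), the core of `H_S^∪` has cardinality at least `q`. -/
theorem stmt8 {α : Type*} [DecidableEq α] (p q : ℕ) (hp : 0 < p) (hq : 0 < q)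
    (H : Finset (Finset α)) (hne : ∀ E ∈ H, E.Nonempty) :
    IsHelly p q H ↔
      ∀ S : Finset (Finset α), S.card = p + 1 → (∀ T ∈ S, T.card = q) →
        (∀ T ∈ S, ∀ x ∈ T, ∃ E ∈ H, x ∈ E) →
        (∀ T ∈ S, ∃ E ∈ H, suppSet S T ⊆ E) →
        q ≤ (hCore (Hcup H S)).ncard := by
  classical
  constructor
  · -- forward: apply Helly to Hcup H S
    intro hH S hScard hSq hSvert hSsupp
    have hcup_sub : Hcup H S ⊆ H := Finset.filter_subset _ _
    have hcup_ne : (Hcup H S).Nonempty := by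
      have hSne : S.Nonempty := by rw [← Finset.card_pos, hScard]; omega
      obtain ⟨T, hT⟩ := hSne
      obtain ⟨E, hE, hsupp⟩ := hSsupp T hT
      exact ⟨E, Finset.mem_filter.mpr ⟨hE, T, hT, hsupp⟩⟩
    apply hH _ hcup_sub hcup_ne
    -- Hcup H S is (p,q)-intersecting
    intro G hG hGne hGcard
    -- choose for each edge of G a member of S whose support set it contains
    let w : Finset α → Finset α := fun E =>
      if h : ∃ T ∈ S, suppSet S T ⊆ E then h.choose else ∅
    have hw : ∀ E ∈ G, w E ∈ S ∧ suppSet S (w E) ⊆ E := by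
      intro E hE
      have hx : ∃ T ∈ S, suppSet S T ⊆ E := (Finset.mem_filter.mp (hG hE)).2
      simp only [w, dif_pos hx]
      exact ⟨hx.choose_spec.1, hx.choose_spec.2⟩
    -- find a member of S not used as witness
    have hW : ¬ S ⊆ G.image w := by
      intro hcon
      have := Finset.card_le_card hcon
      have h2 := Finset.card_image_le (s := G) (f := w)
      omega
    obtain ⟨T₀, hT₀S, hT₀W⟩ := Finset.not_subset.mp hW
    -- T₀ is contained in every edge of G
    apply le_ncard_hCore hGne (hSq T₀ hT₀S)
    intro E hE
    have hwE := hw E hE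
    have hT₀ne : T₀ ≠ w E := fun h => hT₀W (h ▸ Finset.mem_image_of_mem w hE)
    calc T₀ = id T₀ := rfl
    _ ≤ suppSet S (w E) := Finset.le_sup (Finset.mem_erase.mpr ⟨hT₀ne, hT₀S⟩)
    _ ⊆ E := hwE.2
  · -- backward
    intro hrhs F' hsub hne' hint
    exact back_aux p q hp H hrhs F'.card F' le_rfl hsub hne' hint
end

section
/- A hypergraph is hereditary (p,q)-Helly if and only if it has no partial subhypergraph isomorphic to J_{p+1,q,s} for any s in {0,...,q-1}. -/
/-- The subhypergraph of `H` induced by the vertex subset `X`: restrict every edge to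
`X` and discard the empty intersections. -/
def subhyper {α : Type*} [DecidableEq α] (H : Finset (Finset α)) (X : Finset α) :
    Finset (Finset α) :=
  (H.image fun E => E ∩ X).filter fun E => E.Nonempty

/-- `H` is hereditary `(p,q)`-Helly if every subhypergraph of `H` is `(p,q)`-Helly. -/
def IsHereditaryHelly {α : Type*} [DecidableEq α] (p q : ℕ)
    (H : Finset (Finset α)) : Prop :=
  ∀ X : Finset α, IsHelly p q (subhyper H X)
/-- `K` is (isomorphic to) the hypergraph `J_{p+1,q,s}`: on a vertex set `U` of
cardinality `(p+1)(q-s)+s` containing `p+1` pairwise disjoint `(q-s)`-subsets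
`T_1, …, T_{p+1}`, the edges are the sets `U \ T_i`. -/
def IsJ {α : Type*} [DecidableEq α] (p q s : ℕ) (K : Finset (Finset α)) : Prop :=
  ∃ (U : Finset α) (T : Fin (p + 1) → Finset α),
    U.card = (p + 1) * (q - s) + s ∧ (∀ i, T i ⊆ U) ∧ (∀ i, (T i).card = q - s) ∧
    (∀ i j, i ≠ j → Disjoint (T i) (T j)) ∧
    K = Finset.image (fun i => U \ T i) Finset.univ

section aux
variable {α : Type*} [DecidableEq α]

def finCore (G : Finset (Finset α)) : Finset α :=
  (G.sup id).filter fun x => ∀ E ∈ G, x ∈ E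

lemma mem_finCore {G : Finset (Finset α)} {x : α} :
    x ∈ finCore G ↔ (∃ E ∈ G, x ∈ E) ∧ ∀ E ∈ G, x ∈ E := by
  simp [finCore, Finset.mem_sup]

lemma coe_finCore (G : Finset (Finset α)) : (finCore G : Set α) = hCore G := by
  ext x; simp [mem_finCore, hCore]

lemma ncard_hCore (G : Finset (Finset α)) : (hCore G).ncard = (finCore G).card := by
  rw [← coe_finCore, Set.ncard_coe_finset]

lemma finCore_subset {G : Finset (Finset α)} {E : Finset α} (h : E ∈ G) :
    finCore G ⊆ E := fun x hx => (mem_finCore.1 hx).2 E h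

lemma mem_subhyper {H : Finset (Finset α)} {X a : Finset α} :
    a ∈ subhyper H X ↔ (∃ E ∈ H, E ∩ X = a) ∧ a.Nonempty := by
  simp [subhyper]

lemma hCore_image_sdiff {n : ℕ} (U : Finset α) (T : Fin n → Finset α)
    (I : Finset (Fin n)) (hI : I.Nonempty) :
    hCore (I.image fun i => U \ T i) = ↑(U \ I.biUnion T) := by
  obtain ⟨i0, hi0⟩ := hI
  ext x
  simp only [hCore, Finset.coe_sdiff, Set.mem_setOf_eq, Finset.mem_coe,
    Finset.mem_image, Set.mem_diff, Finset.mem_biUnion]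
  constructor
  · rintro ⟨-, hall⟩
    have h0 := hall _ ⟨i0, hi0, rfl⟩
    rw [Finset.mem_sdiff] at h0
    refine ⟨h0.1, ?_⟩
    rintro ⟨i, hiI, hx⟩
    have := hall _ ⟨i, hiI, rfl⟩
    rw [Finset.mem_sdiff] at this
    exact this.2 hx
  · rintro ⟨hxU, hnot⟩
    refine ⟨⟨_, ⟨i0, hi0, rfl⟩, ?_⟩, ?_⟩
    · exact Finset.mem_sdiff.2 ⟨hxU, fun hx => hnot ⟨i0, hi0, hx⟩⟩
    · rintro E ⟨i, hiI, rfl⟩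
      exact Finset.mem_sdiff.2 ⟨hxU, fun hx => hnot ⟨i, hiI, hx⟩⟩

lemma card_sdiff_biUnion {n a : ℕ} (U : Finset α) (T : Fin n → Finset α)
    (hTU : ∀ i, T i ⊆ U) (hTcard : ∀ i, (T i).card = a)
    (hdisj : ∀ i j, i ≠ j → Disjoint (T i) (T j)) (I : Finset (Fin n)) :
    (U \ I.biUnion T).card = U.card - I.card * a := by
  have hsub : I.biUnion T ⊆ U := Finset.biUnion_subset.2 fun i _ => hTU i
  rw [Finset.card_sdiff_of_subset hsub,
    Finset.card_biUnion (fun i _ j _ hij => hdisj i j hij)]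
  congr 1
  rw [Finset.sum_congr rfl fun i _ => hTcard i, Finset.sum_const, smul_eq_mul]

lemma forward_dir {p q : ℕ} (hp : 0 < p) (hq : 0 < q) {H : Finset (Finset α)}
    (hH : IsHereditaryHelly p q H) :
    ¬ ∃ s < q, ∃ H' ⊆ H, ∃ X : Finset α, IsJ p q s (subhyper H' X) := by
  rintro ⟨s, hsq, H', hH'H, X, U, T, hUcard, hTU, hTcard, hTdisj, hK⟩
  have ha : 0 < q - s := by omega
  have hinj : Function.Injective fun i : Fin (p + 1) => U \ T i := by
    intro i j hij
    simp only at hij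
    have hi : T i = T j := by
      rw [← Finset.sdiff_sdiff_eq_self (hTU i), hij, Finset.sdiff_sdiff_eq_self (hTU j)]
    by_contra hne
    have hd := hTdisj i j hne
    rw [hi] at hd
    have hTe : T j = ∅ := Finset.eq_empty_of_forall_notMem fun x hx =>
      (Finset.disjoint_left.1 hd) hx hx
    have hTj := hTcard j
    rw [hTe] at hTj
    simp at hTj
    omega
  -- subhyper H' X ⊆ subhyper H X
  have hsub : subhyper H' X ⊆ subhyper H X := by
    intro a ha
    rw [mem_subhyper] at ha ⊢
    exact ⟨⟨ha.1.choose, hH'H ha.1.choose_spec.1, ha.1.choose_spec.2⟩, ha.2⟩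
  have hKne : (subhyper H' X).Nonempty := by
    rw [hK]
    exact ⟨_, Finset.mem_image.2 ⟨0, Finset.mem_univ _, rfl⟩⟩
  have hint : IsIntersecting p q (subhyper H' X) := by
    intro F'' hF'' hFne hFcard
    classical
    set I : Finset (Fin (p + 1)) := Finset.univ.filter fun i => U \ T i ∈ F'' with hI
    have hFeq : F'' = I.image fun i => U \ T i := by
      apply Finset.Subset.antisymm
      · intro a haF
        have := hF'' haF
        rw [hK, Finset.mem_image] at this
        obtain ⟨i, -, rfl⟩ := this
        exact Finset.mem_image.2 ⟨i, Finset.mem_filter.2 ⟨Finset.mem_univ _, haF⟩, rfl⟩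
      · intro a haI
        obtain ⟨i, hiI, rfl⟩ := Finset.mem_image.1 haI
        exact (Finset.mem_filter.1 hiI).2
    have hIne : I.Nonempty := by
      obtain ⟨a, haF⟩ := hFne
      rw [hFeq] at haF
      obtain ⟨i, hiI, -⟩ := Finset.mem_image.1 haF
      exact ⟨i, hiI⟩
    have hIcard : I.card ≤ p := by
      rw [hFeq, Finset.card_image_of_injective _ hinj] at hFcard
      exact hFcard
    rw [hFeq, hCore_image_sdiff U T I hIne, Set.ncard_coe_finset,
      card_sdiff_biUnion U T hTU hTcard hTdisj]
    have h1 : I.card * (q - s) ≤ p * (q - s) := Nat.mul_le_mul_right _ hIcard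
    have h2 : (p + 1) * (q - s) = p * (q - s) + (q - s) := by ring
    omega
  have := hH X (subhyper H' X) hsub hKne hint
  rw [hK, hCore_image_sdiff U T Finset.univ Finset.univ_nonempty,
    Set.ncard_coe_finset, card_sdiff_biUnion U T hTU hTcard hTdisj] at this
  simp only [Finset.card_univ, Fintype.card_fin] at this
  omega

lemma backward_dir {p q : ℕ} (hp : 0 < p) (hq : 0 < q) {H : Finset (Finset α)}
    (hno : ¬ ∃ s < q, ∃ H' ⊆ H, ∃ X : Finset α, IsJ p q s (subhyper H' X)) :
    IsHereditaryHelly p q H := by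
  classical
  intro X F' hF'sub hF'ne hF'int
  by_contra hlt
  push_neg at hlt
  obtain ⟨G, hGmem, hGmin⟩ := Finset.exists_min_image
    (F'.powerset.filter fun G => G.Nonempty ∧ (hCore G).ncard < q) Finset.card
    ⟨F', Finset.mem_filter.2 ⟨Finset.mem_powerset.2 (Finset.Subset.refl _), hF'ne, hlt⟩⟩
  obtain ⟨hGpow, hGne, hGcore⟩ := Finset.mem_filter.1 hGmem
  have hGsub : G ⊆ F' := Finset.mem_powerset.1 hGpow
  -- G has at least p+1 edges
  have hGcard : p + 1 ≤ G.card := by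
    by_contra h
    push_neg at h
    have := hF'int G hGsub hGne (by omega)
    omega
  -- every erase has core ≥ q
  have hproper : ∀ E ∈ G, q ≤ (hCore (G.erase E)).ncard := by
    intro E hE
    by_contra h
    push_neg at h
    have hecard : (G.erase E).card = G.card - 1 := Finset.card_erase_of_mem hE
    have hene : (G.erase E).Nonempty := Finset.card_pos.1 (by omega)
    have hmem : G.erase E ∈ F'.powerset.filter fun G => G.Nonempty ∧ (hCore G).ncard < q :=
      Finset.mem_filter.2 ⟨Finset.mem_powerset.2 ((Finset.erase_subset _ _).trans hGsub),
        hene, h⟩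
    have := hGmin _ hmem
    omega
  -- choose p+1 distinct edges
  obtain ⟨G1, hG1sub, hG1card⟩ := Finset.exists_subset_card_eq hGcard
  let eq1 := G1.equivFinOfCardEq hG1card
  set e : Fin (p + 1) → Finset α := fun i => ((eq1.symm i : G1) : Finset α) with he
  have heinj : Function.Injective e :=
    fun i j h => eq1.symm.injective (Subtype.coe_injective h)
  have heG : ∀ i, e i ∈ G := fun i => hG1sub (eq1.symm i).2
  set D : Finset α := finCore G with hD
  set s : ℕ := D.card with hs
  have hsq : s < q := by rw [ncard_hCore] at hGcore; exact hGcore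
  set C : Fin (p + 1) → Finset α := fun i => finCore (G.erase (e i)) with hC
  have hCq : ∀ i, q ≤ (C i).card := by
    intro i
    have := hproper (e i) (heG i)
    rwa [ncard_hCore] at this
  have herane : ∀ i, (G.erase (e i)).Nonempty := by
    intro i
    have := Finset.card_erase_of_mem (heG i)
    exact Finset.card_pos.1 (by omega)
  have hDC : ∀ i, D ⊆ C i := by
    intro i x hx
    obtain ⟨E0, hE0⟩ := herane i
    have hx' := mem_finCore.1 hx
    exact mem_finCore.2 ⟨⟨E0, hE0, hx'.2 E0 (Finset.mem_of_mem_erase hE0)⟩,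
      fun E hE => hx'.2 E (Finset.mem_of_mem_erase hE)⟩
  have hCiD : ∀ i, ∀ x ∈ C i, x ∈ e i → x ∈ D := by
    intro i x hx hxe
    have hx' := mem_finCore.1 hx
    refine mem_finCore.2 ⟨⟨e i, heG i, hxe⟩, fun E hE => ?_⟩
    by_cases hEe : E = e i
    · rw [hEe]; exact hxe
    · exact hx'.2 E (Finset.mem_erase.2 ⟨hEe, hE⟩)
  -- choose T i
  have hTex : ∀ i, ∃ t ⊆ C i \ D, t.card = q - s := by
    intro i
    apply Finset.exists_subset_card_eq
    rw [Finset.card_sdiff_of_subset (hDC i)]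
    have := hCq i
    omega
  choose T hTsub hTcard using hTex
  have hTC : ∀ i, T i ⊆ C i := fun i => (hTsub i).trans (Finset.sdiff_subset)
  have hTD : ∀ i, Disjoint (T i) D := by
    intro i
    refine Finset.disjoint_left.2 fun x hx hxD => ?_
    have := hTsub i hx
    exact (Finset.mem_sdiff.1 this).2 hxD
  have hTe : ∀ i, Disjoint (T i) (e i) := by
    intro i
    refine Finset.disjoint_left.2 fun x hx hxe => ?_
    have hxC := hTC i hx
    have hxD := hCiD i x hxC hxe
    exact Finset.disjoint_left.1 (hTD i) hx hxD
  have hCsubE : ∀ i, ∀ E ∈ G, E ≠ e i → C i ⊆ E := by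
    intro i E hE hne
    exact finCore_subset (Finset.mem_erase.2 ⟨hne, hE⟩)
  have hTsubE : ∀ i j, i ≠ j → T i ⊆ e j := by
    intro i j hij
    exact (hTC i).trans (hCsubE i (e j) (heG j) fun h => hij (heinj h).symm)
  have hTdisj : ∀ i j, i ≠ j → Disjoint (T i) (T j) := by
    intro i j hij
    refine Finset.disjoint_left.2 fun x hx hx' => ?_
    have : x ∈ e i := hTsubE j i (Ne.symm hij) hx'
    exact Finset.disjoint_left.1 (hTe i) hx this
  have hDE : ∀ E ∈ G, D ⊆ E := fun E hE => finCore_subset hE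
  -- the vertex set U
  set U : Finset α := D ∪ Finset.univ.biUnion T with hU
  have hDbi : Disjoint D (Finset.univ.biUnion T) :=
    Finset.disjoint_biUnion_right _ _ _ |>.2 fun i _ => (hTD i).symm
  have hUcard : U.card = (p + 1) * (q - s) + s := by
    rw [hU, Finset.card_union_of_disjoint hDbi,
      Finset.card_biUnion fun i _ j _ hij => hTdisj i j hij]
    have : ∑ i : Fin (p + 1), (T i).card = (p + 1) * (q - s) := by
      rw [Finset.sum_congr rfl fun i _ => hTcard i, Finset.sum_const, smul_eq_mul,
        Finset.card_univ, Fintype.card_fin]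
    omega
  have hTU : ∀ i, T i ⊆ U := fun i x hx =>
    Finset.mem_union_right _ (Finset.mem_biUnion.2 ⟨i, Finset.mem_univ _, hx⟩)
  -- edges of G restricted to U
  have heU : ∀ i, e i ∩ U = U \ T i := by
    intro i
    ext x
    simp only [Finset.mem_inter, Finset.mem_sdiff]
    constructor
    · rintro ⟨hxe, hxU⟩
      exact ⟨hxU, fun hx => Finset.disjoint_left.1 (hTe i) hx hxe⟩
    · rintro ⟨hxU, hxT⟩
      refine ⟨?_, hxU⟩
      rcases Finset.mem_union.1 hxU with hxD | hxB
      · exact hDE (e i) (heG i) hxD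
      · obtain ⟨j, -, hxj⟩ := Finset.mem_biUnion.1 hxB
        by_cases hij : j = i
        · exact absurd (hij ▸ hxj) hxT
        · exact hTsubE j i hij hxj
  -- the original edges in H
  have hGX : ∀ E ∈ G, E ⊆ X ∧ ∃ E' ∈ H, E' ∩ X = E := by
    intro E hE
    have := mem_subhyper.1 (hF'sub (hGsub hE))
    obtain ⟨⟨E', hE'H, hE'X⟩, -⟩ := this
    exact ⟨hE'X ▸ Finset.inter_subset_right, E', hE'H, hE'X⟩
  have hEex : ∀ i, ∃ E' ∈ H, E' ∩ X = e i := fun i => (hGX (e i) (heG i)).2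
  choose E' hE'H hE'X using hEex
  have hUX : U ⊆ X := by
    intro x hx
    rcases Finset.mem_union.1 hx with hxD | hxB
    · exact (hGX (e 0) (heG 0)).1 (hDE (e 0) (heG 0) hxD)
    · obtain ⟨j, -, hxj⟩ := Finset.mem_biUnion.1 hxB
      obtain ⟨E1, hE1⟩ := herane j
      have : T j ⊆ E1 := (hTC j).trans (finCore_subset hE1)
      exact (hGX E1 (Finset.mem_of_mem_erase hE1)).1 (this hxj)
  have hE'U : ∀ i, E' i ∩ U = U \ T i := by
    intro i
    calc E' i ∩ U = E' i ∩ (X ∩ U) := by rw [Finset.inter_eq_right.2 hUX]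
      _ = (E' i ∩ X) ∩ U := by rw [Finset.inter_assoc]
      _ = e i ∩ U := by rw [hE'X]
      _ = U \ T i := heU i
  have hUTne : ∀ i, (U \ T i).Nonempty := by
    intro i
    have h1 : (U \ T i).card = U.card - (T i).card := Finset.card_sdiff_of_subset (hTU i)
    rw [hUcard, hTcard i] at h1
    have h2 : (p + 1) * (q - s) = p * (q - s) + (q - s) := by ring
    have h3 : 0 < p * (q - s) := Nat.mul_pos hp (by omega)
    exact Finset.card_pos.1 (by omega)
  -- the partial subhypergraph
  refine hno ⟨s, hsq, Finset.univ.image E', ?_, U, U, T, hUcard, hTU, hTcard, hTdisj, ?_⟩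
  · intro a ha
    obtain ⟨i, -, rfl⟩ := Finset.mem_image.1 ha
    exact hE'H i
  · rw [subhyper, Finset.image_image]
    have himg : Finset.univ.image ((fun E => E ∩ U) ∘ E') =
        Finset.univ.image fun i => U \ T i :=
      Finset.image_congr fun i _ => hE'U i
    rw [himg, Finset.filter_true_of_mem]
    intro a ha
    obtain ⟨i, -, rfl⟩ := Finset.mem_image.1 ha
    exact hUTne i

end aux

/-- A hypergraph is hereditary `(p,q)`-Helly iff it has no partial subhypergraph
(subfamily of edges restricted to a vertex subset) isomorphic to `J_{p+1,q,s}` for any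
`s ∈ {0, …, q-1}`. -/
theorem stmt9 {α : Type*} [DecidableEq α] (p q : ℕ) (hp : 0 < p) (hq : 0 < q)
    (H : Finset (Finset α)) (hne : ∀ E ∈ H, E.Nonempty) :
    IsHereditaryHelly p q H ↔
      ¬ ∃ s < q, ∃ H' ⊆ H, ∃ X : Finset α, IsJ p q s (subhyper H' X) := by
  constructor
  · exact fun h => forward_dir hp hq h
  · exact fun h => backward_dir hp hq h
end

section
/- For positive integers p, q and s in {0,...,q-1}, the hypergraph J_{p+1,q,s} is (p,q)-intersecting but its core has exactly s elements; consequently J_{p+1,q,s} is not (p,q)-Helly. -/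
/-- For positive integers `p`, `q` and `s ∈ {0, …, q-1}`, the hypergraph `J_{p+1,q,s}` is
`(p,q)`-intersecting but its core has exactly `s` elements; consequently `J_{p+1,q,s}` is
not `(p,q)`-Helly. -/
theorem stmt10 {α : Type*} [DecidableEq α] (p q s : ℕ) (hp : 0 < p) (hq : 0 < q)
    (hs : s < q) (K : Finset (Finset α)) (hK : IsJ p q s K) :
    IsIntersecting p q K ∧ (hCore K).ncard = s ∧ ¬ IsHelly p q K := by
  classical
  obtain ⟨U, T, hUcard, hTU, hTcard, hdisj, hKeq⟩ := hK
  have hn0 : 0 < q - s := by omega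
  have hTne : ∀ i, (T i).Nonempty := fun i => Finset.card_pos.mp (by rw [hTcard]; exact hn0)
  have hTinj : Function.Injective T := by
    intro i j hij
    by_contra h
    have hd := hdisj i j h
    rw [hij] at hd
    exact (hTne j).ne_empty (by simpa using hd)
  have hEinj : ∀ i j : Fin (p + 1), U \ T i = U \ T j → i = j := by
    intro i j hij
    apply hTinj
    have h1 := Finset.sdiff_sdiff_eq_self (hTU i)
    have h2 := Finset.sdiff_sdiff_eq_self (hTU j)
    rw [← h1, ← h2, hij]
  have key : ∀ F' : Finset (Finset α), F' ⊆ K → F'.Nonempty →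
      (hCore F').ncard
        = (p+1)*(q-s) + s - (Finset.univ.filter (fun i => U \ T i ∈ F')).card * (q-s) := by
    intro F' hsub hne
    set S := Finset.univ.filter (fun i => U \ T i ∈ F') with hS
    have hmemF' : ∀ E ∈ F', ∃ i ∈ S, E = U \ T i := by
      intro E hE
      have hEK := hsub hE
      rw [hKeq] at hEK
      obtain ⟨i, -, rfl⟩ := Finset.mem_image.mp hEK
      exact ⟨i, Finset.mem_filter.mpr ⟨Finset.mem_univ _, hE⟩, rfl⟩
    have hcore : hCore F' = ↑(U \ S.biUnion T) := by
      ext x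
      simp only [hCore, Set.mem_setOf_eq, Finset.coe_sdiff, Set.mem_diff,
        Finset.mem_coe, Finset.mem_biUnion, not_exists, not_and]
      constructor
      · rintro ⟨⟨E, hE, hxE⟩, hall⟩
        obtain ⟨i, hi, rfl⟩ := hmemF' E hE
        refine ⟨(Finset.mem_sdiff.mp hxE).1, ?_⟩
        intro j hj hxj
        have hmem := hall _ ((Finset.mem_filter.mp hj).2)
        exact (Finset.mem_sdiff.mp hmem).2 hxj
      · rintro ⟨hxU, hnot⟩
        obtain ⟨E0, hE0⟩ := hne
        have hall : ∀ E ∈ F', x ∈ E := by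
          intro E hE
          obtain ⟨i, hi, rfl⟩ := hmemF' E hE
          exact Finset.mem_sdiff.mpr ⟨hxU, hnot i hi⟩
        exact ⟨⟨E0, hE0, hall _ hE0⟩, hall⟩
    rw [hcore, Set.ncard_coe_finset]
    rw [Finset.card_sdiff_of_subset (by
      intro x hx
      obtain ⟨i, -, hxi⟩ := Finset.mem_biUnion.mp hx
      exact hTU i hxi)]
    rw [Finset.card_biUnion (fun i _ j _ hij => hdisj i j hij), hUcard]
    congr 1
    simp [hTcard, Finset.sum_const, mul_comm]
  have hSle : ∀ F' : Finset (Finset α), F' ⊆ K →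
      (Finset.univ.filter (fun i => U \ T i ∈ F')).card ≤ F'.card := by
    intro F' hsub
    apply Finset.card_le_card_of_injOn (fun i => U \ T i)
    · intro i hi; exact (Finset.mem_filter.mp hi).2
    · intro i _ j _ h; exact hEinj i j h
  have hInter : IsIntersecting p q K := by
    intro F' hsub hne hcard
    rw [key F' hsub hne]
    set k := (Finset.univ.filter (fun i => U \ T i ∈ F')).card with hk
    have hkp : k ≤ p := le_trans (hSle F' hsub) hcard
    have h1 : (k+1) * (q-s) ≤ (p+1)*(q-s) := Nat.mul_le_mul_right _ (by omega)
    rw [add_mul, one_mul] at h1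
    omega
  have hKne : K.Nonempty :=
    ⟨U \ T 0, by rw [hKeq]; exact Finset.mem_image_of_mem _ (Finset.mem_univ 0)⟩
  have hfilt : Finset.univ.filter (fun i : Fin (p+1) => U \ T i ∈ K) = Finset.univ := by
    apply Finset.filter_true_of_mem
    intro i _
    rw [hKeq]
    exact Finset.mem_image_of_mem _ (Finset.mem_univ i)
  have hcoreK : (hCore K).ncard = s := by
    rw [key K (subset_refl K) hKne, hfilt, Finset.card_univ, Fintype.card_fin]
    omega
  refine ⟨hInter, hcoreK, ?_⟩
  intro hH
  have := hH K (subset_refl K) hKne hInter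
  omega
end

section
/- A hypergraph H is hereditary (p,q)-Helly if and only if H is strong (p,q)-Helly, i.e., for every nonempty (p,q)-intersecting subfamily F' of edges of H there is a nonempty subfamily of at most p members of F' whose intersection equals the intersection of all of F'. -/
lemma mem_hCore {β : Type*} {F : Finset (Finset β)} (h : F.Nonempty) {x : β} :
    x ∈ hCore F ↔ ∀ E ∈ F, x ∈ E := by
  constructor
  · exact fun hx => hx.2
  · intro hx
    obtain ⟨E, hE⟩ := h
    exact ⟨⟨E, hE, hx E hE⟩, hx⟩

lemma hCore_mono {β : Type*} {F F' : Finset (Finset β)} (hsub : F' ⊆ F)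
    (h : F'.Nonempty) : hCore F ⊆ hCore F' := by
  intro x hx
  rw [mem_hCore h]
  exact fun E hE => hx.2 E (hsub hE)

lemma subhyper_sup {α : Type*} [DecidableEq α] (H : Finset (Finset α))
    (hne : ∀ E ∈ H, E.Nonempty) : subhyper H (H.sup id) = H := by
  ext A
  simp only [subhyper, Finset.mem_filter, Finset.mem_image]
  constructor
  · rintro ⟨⟨E, hE, rfl⟩, -⟩
    rw [show E ∩ H.sup id = E from Finset.inter_eq_left.mpr (Finset.le_sup (f := id) hE)]; exact hE
  · intro hA
    exact ⟨⟨A, hA, Finset.inter_eq_left.mpr (Finset.le_sup (f := id) hA)⟩, hne A hA⟩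

lemma backward_dir_s13 {α : Type*} [DecidableEq α] (p q : ℕ) (H : Finset (Finset α))
    (hS : ∀ F' ⊆ H, F'.Nonempty → IsIntersecting p q F' →
        ∃ F'' ⊆ F', F''.Nonempty ∧ F''.card ≤ p ∧ hCore F'' = hCore F') :
    IsHereditaryHelly p q H := by
  intro X F' hsub hne' hint
  have hmem : ∀ A ∈ F', ∃ E, E ∈ H ∧ E ∩ X = A := by
    intro A hA
    have h2 := hsub hA
    simp only [subhyper, Finset.mem_filter, Finset.mem_image] at h2
    obtain ⟨⟨E, hE, hEX⟩, -⟩ := h2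
    exact ⟨E, hE, hEX⟩
  choose! g hg1 hg2 using hmem
  have ginj : Set.InjOn g ↑F' := fun A hA B hB h => by
    rw [← hg2 A hA, ← hg2 B hB, h]
  have key : ∀ T ⊆ F', T.Nonempty → hCore (T.image g) ∩ ↑X = hCore T := by
    intro T hT hTne
    ext x
    simp only [Set.mem_inter_iff, mem_hCore hTne, mem_hCore (hTne.image g),
      Finset.mem_image, Finset.mem_coe]
    constructor
    · rintro ⟨h1, h2⟩ A hA
      rw [← hg2 A (hT hA)]
      exact Finset.mem_inter.mpr ⟨h1 _ ⟨A, hA, rfl⟩, h2⟩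
    · intro h
      obtain ⟨A0, hA0⟩ := hTne
      have hx0 := h A0 hA0
      rw [← hg2 A0 (hT hA0)] at hx0
      refine ⟨?_, (Finset.mem_inter.mp hx0).2⟩
      rintro E ⟨A, hA, rfl⟩
      have hx := h A hA
      rw [← hg2 A (hT hA)] at hx
      exact (Finset.mem_inter.mp hx).1
  have hLsub : F'.image g ⊆ H := by
    intro E hE
    obtain ⟨A, hA, rfl⟩ := Finset.mem_image.mp hE
    exact hg1 A hA
  have hLint : IsIntersecting p q (F'.image g) := by
    intro S hSL hSne hSp
    obtain ⟨T, hT, rfl⟩ := Finset.subset_image_iff.mp hSL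
    have hTne : T.Nonempty := by
      rw [Finset.image_nonempty] at hSne; exact hSne
    have hTcard : T.card ≤ p := by
      rwa [Finset.card_image_of_injOn (ginj.mono (Finset.coe_subset.mpr hT))] at hSp
    calc q ≤ (hCore T).ncard := hint T hT hTne hTcard
      _ ≤ (hCore (T.image g)).ncard := by
          refine Set.ncard_le_ncard ?_ (hCore_finite (hTne.image g))
          rw [← key T hT hTne]
          exact Set.inter_subset_left
  obtain ⟨L'', hL''sub, hL''ne, hL''p, hL''core⟩ := hS (F'.image g) hLsub (hne'.image g) hLint
  obtain ⟨T'', hT''sub, rfl⟩ := Finset.subset_image_iff.mp hL''sub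
  have hT''ne : T''.Nonempty := by rwa [Finset.image_nonempty] at hL''ne
  have hT''card : T''.card ≤ p := by
    rwa [Finset.card_image_of_injOn (ginj.mono (Finset.coe_subset.mpr hT''sub))] at hL''p
  have hcoreeq : hCore F' = hCore T'' := by
    rw [← key F' (subset_refl F') hne', ← key T'' hT''sub hT''ne, hL''core]
  rw [hcoreeq]
  exact hint T'' hT''sub hT''ne hT''card

lemma forward_aux {α : Type*} [DecidableEq α] (p q : ℕ) (hp : 0 < p) (hq : 0 < q)
    (H : Finset (Finset α)) (hne : ∀ E ∈ H, E.Nonempty) (hH : IsHereditaryHelly p q H) :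
    ∀ n (F' : Finset (Finset α)), F'.card ≤ n → F' ⊆ H → F'.Nonempty →
      IsIntersecting p q F' →
      ∃ F'' ⊆ F', F''.Nonempty ∧ F''.card ≤ p ∧ hCore F'' = hCore F' := by
  intro n
  induction n with
  | zero =>
    intro F' hc hsub hne' _
    have := Finset.card_pos.mpr hne'
    omega
  | succ n ih =>
    intro F' hcard hsub hne' hint
    by_cases hple : F'.card ≤ p
    · exact ⟨F', subset_refl _, hne', hple, rfl⟩
    push_neg at hple
    have main : ∃ E ∈ F', hCore (F'.erase E) = hCore F' := by
      by_contra hcon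
      push_neg at hcon
      have h2card : 1 < F'.card := lt_of_le_of_lt hp hple
      obtain ⟨E0, hE0⟩ := id hne'
      obtain ⟨a0, -⟩ := hne E0 (hsub hE0)
      have hfex : ∀ E : Finset α, ∃ x : α,
          E ∈ F' → (x ∈ hCore (F'.erase E) ∧ x ∉ hCore F') := by
        intro E
        by_cases hE : E ∈ F'
        · have hers : (F'.erase E).Nonempty := by
            rw [← Finset.card_pos, Finset.card_erase_of_mem hE]; omega
          have hsubc : hCore F' ⊆ hCore (F'.erase E) :=
            hCore_mono (Finset.erase_subset E F') hers
          have hnsub : ¬ hCore (F'.erase E) ⊆ hCore F' :=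
            fun h => hcon E hE (Set.Subset.antisymm h hsubc)
          obtain ⟨x, hx1, hx2⟩ := Set.not_subset.mp hnsub
          exact ⟨x, fun _ => ⟨hx1, hx2⟩⟩
        · exact ⟨a0, fun h => absurd h hE⟩
      choose f hf using hfex
      have hfmem : ∀ E ∈ F', ∀ E' ∈ F', E' ≠ E → f E ∈ E' := fun E hE E' hE' hne2 =>
        ((hf E hE).1).2 E' (Finset.mem_erase.mpr ⟨hne2, hE'⟩)
      have hfnot : ∀ E ∈ F', f E ∉ E := by
        intro E hE hmemE
        apply (hf E hE).2
        rw [mem_hCore hne']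
        intro E' hE'
        by_cases h : E' = E
        · rw [h]; exact hmemE
        · exact hfmem E hE E' hE' h
      have finj : Set.InjOn f ↑F' := by
        intro E hE E' hE' heq
        by_contra hne2
        apply hfnot E hE
        rw [heq]
        exact hfmem E' hE' E hE hne2
      have hqF : q ≤ (hCore F').ncard := by
        have h1 := hH (H.sup id)
        rw [subhyper_sup H hne] at h1
        exact h1 F' hsub hne' hint
      have hfin : (hCore F').Finite := hCore_finite hne'
      have hCfcard : q ≤ hfin.toFinset.card := by
        rwa [Set.ncard_eq_toFinset_card (hCore F') hfin] at hqF
      obtain ⟨C₀, hC₀sub, hC₀card⟩ :=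
        Finset.exists_subset_card_eq (show q - 1 ≤ hfin.toFinset.card by omega)
      set xs := F'.image f with hxs
      set X := C₀ ∪ xs with hX
      have hC₀core : ∀ y ∈ C₀, y ∈ hCore F' := fun y hy =>
        hfin.mem_toFinset.mp (hC₀sub hy)
      have hdisj : Disjoint C₀ xs := by
        rw [Finset.disjoint_left]
        intro y hy hyx
        obtain ⟨E, hE, hEy⟩ := Finset.mem_image.mp hyx
        exact (hf E hE).2 (hEy ▸ hC₀core y hy)
      have hXcard : X.card = (q - 1) + F'.card := by
        rw [hX, Finset.card_union_of_disjoint hdisj, hC₀card,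
          Finset.card_image_of_injOn finj]
      have hfX : ∀ E ∈ F', f E ∈ X := fun E hE =>
        Finset.mem_union_right _ (Finset.mem_image_of_mem f hE)
      have key : ∀ E ∈ F', E ∩ X = X.erase (f E) := by
        intro E hE
        ext y
        simp only [Finset.mem_inter, Finset.mem_erase]
        constructor
        · rintro ⟨hyE, hyX⟩
          refine ⟨?_, hyX⟩
          rintro rfl
          exact hfnot E hE hyE
        · rintro ⟨hyne, hyX⟩
          refine ⟨?_, hyX⟩
          rcases Finset.mem_union.mp hyX with hyC | hyxs
          · exact (hC₀core y hyC).2 E hE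
          · obtain ⟨E', hE', rfl⟩ := Finset.mem_image.mp hyxs
            exact hfmem E' hE' E hE (fun h => hyne (by rw [h]))
      set G := F'.image (fun E => E ∩ X) with hG
      have heraseinj : ∀ y ∈ X, ∀ y' ∈ X, X.erase y = X.erase y' → y = y' := by
        intro y hy y' hy' h
        by_contra hne2
        have hmem : y ∈ X.erase y' := Finset.mem_erase.mpr ⟨hne2, hy⟩
        rw [← h] at hmem
        exact (Finset.mem_erase.mp hmem).1 rfl
      have hGsub : G ⊆ subhyper H X := by
        intro A hA
        obtain ⟨E, hE, rfl⟩ := Finset.mem_image.mp hA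
        simp only [subhyper, Finset.mem_filter, Finset.mem_image]
        refine ⟨⟨E, hsub hE, rfl⟩, ?_⟩
        obtain ⟨E', hE', hne2⟩ := Finset.exists_mem_ne h2card E
        rw [key E hE]
        exact ⟨f E', Finset.mem_erase.mpr
          ⟨fun h => hne2 (finj (Finset.mem_coe.mpr hE') (Finset.mem_coe.mpr hE) h),
           hfX E' hE'⟩⟩
      have hGcard : G.card = F'.card := by
        rw [hG, Finset.image_congr (fun E hE => key E hE), Finset.card_image_of_injOn]
        intro E hE E' hE' h
        exact finj hE hE' (heraseinj _ (hfX E hE) _ (hfX E' hE') h)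
      have hcoreS : ∀ S ⊆ G, S.Nonempty → (hCore S).ncard = X.card - S.card := by
        intro S hSG hSne
        set Y := X.filter (fun y => X.erase y ∈ S) with hY
        have hSY : S = Y.image (fun y => X.erase y) := by
          ext A
          constructor
          · intro hA
            obtain ⟨E, hE, rfl⟩ := Finset.mem_image.mp (hSG hA)
            have hk := key E hE
            refine Finset.mem_image.mpr ⟨f E,
              Finset.mem_filter.mpr ⟨hfX E hE, by rwa [← hk]⟩, hk.symm⟩
          · intro hA
            obtain ⟨y, hy, rfl⟩ := Finset.mem_image.mp hA
            exact (Finset.mem_filter.mp hy).2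
        have hYsub : Y ⊆ X := Finset.filter_subset _ _
        have hScard : S.card = Y.card := by
          rw [hSY, Finset.card_image_of_injOn]
          intro y hy y' hy' h
          exact heraseinj y (hYsub hy) y' (hYsub hy') h
        have hYne : Y.Nonempty := by
          rw [hSY] at hSne
          exact Finset.image_nonempty.mp hSne
        have hcore : hCore S = ↑(X \ Y) := by
          ext x
          rw [mem_hCore hSne]
          simp only [Finset.coe_sdiff, Set.mem_diff, Finset.mem_coe]
          constructor
          · intro h
            obtain ⟨y0, hy0⟩ := hYne
            have hx0 := h _ (by rw [hSY]; exact Finset.mem_image_of_mem _ hy0)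
            refine ⟨(Finset.mem_erase.mp hx0).2, ?_⟩
            intro hxY
            have hx1 := h _ (by rw [hSY]; exact Finset.mem_image_of_mem _ hxY)
            exact (Finset.mem_erase.mp hx1).1 rfl
          · rintro ⟨hxX, hxY⟩ A hA
            rw [hSY] at hA
            obtain ⟨y, hy, rfl⟩ := Finset.mem_image.mp hA
            exact Finset.mem_erase.mpr ⟨fun h => hxY (h ▸ hy), hxX⟩
        rw [hcore, Set.ncard_coe_finset, Finset.card_sdiff_of_subset hYsub, hScard]
      have hGne : G.Nonempty := hne'.image _
      have hGint : IsIntersecting p q G := by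
        intro S hSG hSne hSp
        rw [hcoreS S hSG hSne, hXcard]
        omega
      have hfinal := hH X G hGsub hGne hGint
      rw [hcoreS G (subset_refl G) hGne, hXcard, hGcard] at hfinal
      omega
    obtain ⟨E, hE, hEeq⟩ := main
    have herase_ne : (F'.erase E).Nonempty := by
      rw [← Finset.card_pos, Finset.card_erase_of_mem hE]; omega
    obtain ⟨F'', h1, h2, h3, h4⟩ := ih (F'.erase E)
      (by rw [Finset.card_erase_of_mem hE]; omega)
      ((Finset.erase_subset E F').trans hsub) herase_ne
      (fun S hS => hint S (hS.trans (Finset.erase_subset _ _)))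
    exact ⟨F'', h1.trans (Finset.erase_subset _ _), h2, h3, h4.trans hEeq⟩


/-- A hypergraph `H` is hereditary `(p,q)`-Helly iff it is strong `(p,q)`-Helly: for
every nonempty `(p,q)`-intersecting subfamily `F'` of edges of `H` there is a nonempty
subfamily of at most `p` members of `F'` whose intersection equals the intersection of
all of `F'`. -/
theorem stmt13 {α : Type*} [DecidableEq α] (p q : ℕ) (hp : 0 < p) (hq : 0 < q)
    (H : Finset (Finset α)) (hne : ∀ E ∈ H, E.Nonempty) :
    IsHereditaryHelly p q H ↔
      ∀ F' ⊆ H, F'.Nonempty → IsIntersecting p q F' →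
        ∃ F'' ⊆ F', F''.Nonempty ∧ F''.card ≤ p ∧ hCore F'' = hCore F' := by
  constructor
  · intro hH F' hsub hne' hint
    exact forward_aux p q hp hq H hne hH F'.card F' le_rfl hsub hne' hint
  · exact backward_dir_s13 p q H
end

section
/- Let G be a graph and P a clique of G, and let C_P denote the family of maximal cliques of G containing P. Then the intersection of all members of C_P equals the set of vertices of G that are complete to the set of vertices complete to P; in particular, this intersection is a clique of G containing P. -/
/-- `compTo G W` is the set of vertices of `G` that are complete to `W`, i.e. adjacent
to every vertex of `W` other than themselves. -/
def compTo {V : Type*} (G : SimpleGraph V) (W : Set V) : Set V :=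
  {v | ∀ w ∈ W, v ≠ w → G.Adj v w}

lemma exists_maximal_clique {V : Type*} (G : SimpleGraph V) (K : Set V)
    (hK : G.IsClique K) :
    ∃ Q, G.IsClique Q ∧ (∀ R, G.IsClique R → Q ⊆ R → Q = R) ∧ K ⊆ Q := by
  obtain ⟨m, hm, hmax⟩ := zorn_subset_nonempty {Q : Set V | G.IsClique Q ∧ K ⊆ Q}
    (fun c hc hchain hne => by
      refine ⟨⋃₀ c, ⟨?_, ?_⟩, fun s hs => Set.subset_sUnion_of_mem hs⟩
      · intro u hu v hv huv
        obtain ⟨s, hs, hus⟩ := hu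
        obtain ⟨t, ht, hvt⟩ := hv
        rcases hchain.total hs ht with h | h
        · exact (hc ht).1 (h hus) hvt huv
        · exact (hc hs).1 hus (h hvt) huv
      · obtain ⟨s, hs⟩ := hne
        exact (hc hs).2.trans (Set.subset_sUnion_of_mem hs)) K ⟨hK, Set.Subset.rfl⟩
  exact ⟨m, hmax.prop.1, fun R hR hmR =>
    (hmax.eq_of_subset ⟨hR, hmax.prop.2.trans hmR⟩ hmR).symm ▸ rfl, hmax.prop.2⟩

/-- For a clique `P` of a graph `G`, the intersection of all maximal cliques of `G`
containing `P` equals the set of vertices complete to the set of vertices complete to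
`P`; in particular this intersection is a clique of `G` containing `P`. -/
theorem stmt14 {V : Type*} [Fintype V] (G : SimpleGraph V) (P : Set V)
    (hP : G.IsClique P) :
    (⋂ Q ∈ {Q : Set V | G.IsClique Q ∧ (∀ R, G.IsClique R → Q ⊆ R → Q = R) ∧ P ⊆ Q}, Q)
        = compTo G (compTo G P) ∧
    G.IsClique
      (⋂ Q ∈ {Q : Set V | G.IsClique Q ∧ (∀ R, G.IsClique R → Q ⊆ R → Q = R) ∧ P ⊆ Q}, Q) ∧
    P ⊆ ⋂ Q ∈ {Q : Set V | G.IsClique Q ∧ (∀ R, G.IsClique R → Q ⊆ R → Q = R) ∧ P ⊆ Q}, Q := by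
  have hPcomp : P ⊆ compTo G P := fun p hp w hw hne => hP hp hw hne
  -- S := compTo G (compTo G P) is contained in compTo G P
  have hSsub : compTo G (compTo G P) ⊆ compTo G P := fun v hv p hp hne =>
    hv p (hPcomp hp) hne
  have heq : (⋂ Q ∈ {Q : Set V | G.IsClique Q ∧ (∀ R, G.IsClique R → Q ⊆ R → Q = R) ∧ P ⊆ Q}, Q)
      = compTo G (compTo G P) := by
    apply Set.Subset.antisymm
    · intro v hv w hw hne
      -- P ∪ {w} is a clique
      have hclq : G.IsClique (insert w P) := by
        intro a ha b hb hab
        rcases ha with rfl | ha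
        · rcases hb with rfl | hb
          · exact absurd rfl hab
          · exact hw b hb hab
        · rcases hb with rfl | hb
          · exact (hw a ha (Ne.symm hab)).symm
          · exact hP ha hb hab
      obtain ⟨Q, hQc, hQmax, hQsub⟩ := exists_maximal_clique G _ hclq
      have hvQ : v ∈ Q := by
        simp only [Set.mem_iInter] at hv
        exact hv Q ⟨hQc, hQmax, (Set.subset_insert w P).trans hQsub⟩
      exact hQc hvQ (hQsub (Set.mem_insert w P)) hne
    · intro v hv
      simp only [Set.mem_iInter]
      rintro Q ⟨hQc, hQmax, hPQ⟩
      -- every vertex of Q is complete to P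
      have hQcomp : Q ⊆ compTo G P := fun q hq p hp hne => hQc hq (hPQ hp) hne
      have hclq : G.IsClique (insert v Q) := by
        intro a ha b hb hab
        rcases ha with rfl | ha
        · rcases hb with rfl | hb
          · exact absurd rfl hab
          · exact hv b (hQcomp hb) hab
        · rcases hb with rfl | hb
          · exact (hv a (hQcomp ha) (Ne.symm hab)).symm
          · exact hQc ha hb hab
      have := hQmax _ hclq (Set.subset_insert v Q)
      rw [this]
      exact Set.mem_insert v Q
  refine ⟨heq, ?_, ?_⟩
  · rw [heq]
    intro u hu v hv huv
    exact hu v (hSsub hv) huv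
  · intro p hp
    simp only [Set.mem_iInter]
    rintro Q ⟨_, _, hPQ⟩
    exact hPQ hp
end

section
/- For each s in {0,...,q-1}, no (p+1,q,s)-ocular graph is (p,q)-clique-Helly; specifically, when p ≥ 2 the p+1 sets Q_i = (U \ T_i) ∪ {w_i} are maximal cliques forming a (p,q)-intersecting family whose total intersection has exactly s elements. -/
open Classical in
/-- The family of maximal cliques of a finite graph `G`, as a finite family of
finite vertex sets. -/
noncomputable def maxCliques {V : Type*} [Fintype V] [DecidableEq V]
    (G : SimpleGraph V) : Finset (Finset V) :=
  Finset.univ.filter fun Q : Finset V =>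
    G.IsClique (Q : Set V) ∧ ∀ R : Finset V, G.IsClique (R : Set V) → Q ⊆ R → Q = R
/-- Explicit data of a `(p+1,q,s)`-ocular for `p ≥ 2`: the whole vertex set is the
disjoint union of a clique `U` of cardinality `(p+1)(q-s)+s` containing `p+1` pairwise
disjoint `(q-s)`-subsets `T 0, …, T p`, and `p+1` further vertices `w 0, …, w p`, where
each `w i` is complete to `U \ T i` and anticomplete to `T i` (the graph induced by the
`w i` is arbitrary). -/
def OcularData {V : Type*} [DecidableEq V] (G : SimpleGraph V) (p q s : ℕ)
    (U : Finset V) (T : Fin (p + 1) → Finset V) (w : Fin (p + 1) → V) : Prop :=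
  ((↑U ∪ Set.range w : Set V) = Set.univ) ∧ (∀ i, w i ∉ U) ∧ Function.Injective w ∧
  U.card = (p + 1) * (q - s) + s ∧ (∀ i, T i ⊆ U) ∧ (∀ i, (T i).card = q - s) ∧
  (∀ i j, i ≠ j → Disjoint (T i) (T j)) ∧ G.IsClique (U : Set V) ∧
  (∀ i, ∀ u ∈ U, u ∉ T i → G.Adj (w i) u) ∧ (∀ i, ∀ u ∈ T i, ¬ G.Adj (w i) u)

/-- `G` is a `(p+1,q,s)`-ocular graph.  For `p = 1` the vertex set is a set `U` of
cardinality `2(q-s)+s` with two disjoint `(q-s)`-subsets `T 0, T 1` such that `U \ T i`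
is a clique not extendable by any vertex of `T i`; for `p ≥ 2` it is given by
`OcularData`. -/
def IsOcular {V : Type*} [DecidableEq V] (G : SimpleGraph V) (p q s : ℕ) : Prop :=
  (p = 1 ∧ ∃ (U : Finset V) (T : Fin (p + 1) → Finset V),
      (↑U : Set V) = Set.univ ∧ U.card = (p + 1) * (q - s) + s ∧
      (∀ i, T i ⊆ U) ∧ (∀ i, (T i).card = q - s) ∧
      (∀ i j, i ≠ j → Disjoint (T i) (T j)) ∧
      (∀ i, G.IsClique ((U \ T i : Finset V) : Set V)) ∧
      (∀ i, ∀ v ∈ T i, ¬ G.IsClique (((U \ T i : Finset V) : Set V) ∪ {v}))) ∨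
  (2 ≤ p ∧ ∃ (U : Finset V) (T : Fin (p + 1) → Finset V) (w : Fin (p + 1) → V),
      OcularData G p q s U T w)

theorem mem_maxCliques' {V : Type*} [Fintype V] [DecidableEq V] {G : SimpleGraph V}
    {Q : Finset V} :
    Q ∈ maxCliques G ↔ G.IsClique (Q : Set V) ∧
      ∀ R : Finset V, G.IsClique (R : Set V) → Q ⊆ R → Q = R := by
  classical
  simp [maxCliques]

theorem ocular_aux {V : Type*} [Fintype V] [DecidableEq V] (p q s : ℕ)
    (hp : 0 < p) (hs : s < q) (G : SimpleGraph V)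
    (U : Finset V) (T : Fin (p + 1) → Finset V) (w : Fin (p + 1) → V)
    (hoc : OcularData G p q s U T w) :
    (∀ i, insert (w i) (U \ T i) ∈ maxCliques G) ∧
    IsIntersecting p q (Finset.image (fun i => insert (w i) (U \ T i)) Finset.univ) ∧
    (hCore (Finset.image (fun i => insert (w i) (U \ T i)) Finset.univ)).ncard = s := by
  obtain ⟨hcov, hwU, hwinj, hUcard, hTU, hTcard, hTdisj, hUclq, hcomp, hanti⟩ := hoc
  set c := q - s with hc
  have hcpos : 0 < c := by omega
  set Q : Fin (p+1) → Finset V := fun i => insert (w i) (U \ T i) with hQ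
  have hclq : ∀ i, G.IsClique (Q i : Set V) := by
    intro i x hx y hy hxy
    simp only [hQ, Finset.coe_insert, Set.mem_insert_iff, Finset.coe_sdiff,
      Set.mem_diff, Finset.mem_coe] at hx hy
    rcases hx with rfl | ⟨hxU, hxT⟩
    · rcases hy with rfl | ⟨hyU, hyT⟩
      · exact absurd rfl hxy
      · exact hcomp i y hyU hyT
    · rcases hy with rfl | ⟨hyU, hyT⟩
      · exact (hcomp i x hxU hxT).symm
      · exact hUclq hxU hyU hxy
  have hmax : ∀ i, Q i ∈ maxCliques G := by
    intro i
    rw [mem_maxCliques']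
    refine ⟨hclq i, fun R hR hsub => ?_⟩
    by_contra hne
    obtain ⟨v, hvR, hvQ⟩ := Finset.exists_of_ssubset (lt_of_le_of_ne hsub hne)
    have hv : v ∈ (↑U ∪ Set.range w : Set V) := by rw [hcov]; trivial
    have hwiR : w i ∈ R := hsub (Finset.mem_insert_self _ _)
    rcases hv with hvU | ⟨j, rfl⟩
    · have hvU' : v ∈ U := hvU
      have hvT : v ∈ T i := by
        by_contra hvT
        exact hvQ (Finset.mem_insert_of_mem (Finset.mem_sdiff.mpr ⟨hvU', hvT⟩))
      have hne' : w i ≠ v := fun h => hwU i (h ▸ hvU')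
      exact hanti i v hvT (hR hwiR hvR hne')
    · have hji : j ≠ i := by
        rintro rfl
        exact hvQ (Finset.mem_insert_self _ _)
      obtain ⟨u, hu⟩ := Finset.card_pos.mp (show 0 < (T j).card by rw [hTcard j]; exact hcpos)
      have huU : u ∈ U := hTU j hu
      have huTi : u ∉ T i := fun h => (Finset.disjoint_left.mp (hTdisj j i hji)) hu h
      have huR : u ∈ R := hsub (Finset.mem_insert_of_mem (Finset.mem_sdiff.mpr ⟨huU, huTi⟩))
      have hne' : w j ≠ u := fun h => hwU j (h ▸ huU)
      exact hanti j u hu (hR hvR huR hne')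
  have hQinj : Function.Injective Q := by
    intro i j hij
    by_contra hne
    have hmem : w i ∈ Q j := hij ▸ Finset.mem_insert_self (w i) (U \ T i)
    rcases Finset.mem_insert.mp hmem with h | h
    · exact hne (hwinj h)
    · exact hwU i (Finset.mem_sdiff.mp h).1
  have hsubcore : ∀ S : Finset (Fin (p+1)), S.Nonempty →
      ((U \ S.biUnion T : Finset V) : Set V) ⊆ hCore (S.image Q) := by
    intro S hS x hx
    rw [Finset.mem_coe, Finset.mem_sdiff] at hx
    obtain ⟨hxU, hxB⟩ := hx
    have hmem : ∀ i ∈ S, x ∈ Q i := by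
      intro i hi
      refine Finset.mem_insert_of_mem (Finset.mem_sdiff.mpr ⟨hxU, fun h => ?_⟩)
      exact hxB (Finset.mem_biUnion.mpr ⟨i, hi, h⟩)
    obtain ⟨i0, hi0⟩ := hS
    exact ⟨⟨Q i0, Finset.mem_image_of_mem Q hi0, hmem i0 hi0⟩,
      fun E hE => by
        obtain ⟨i, hi, rfl⟩ := Finset.mem_image.mp hE
        exact hmem i hi⟩
  have hcardlow : ∀ S : Finset (Fin (p+1)), S.card ≤ p →
      q ≤ (U \ S.biUnion T).card := by
    intro S hSp
    have h1 : (S.biUnion T).card ≤ S.card * c := by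
      calc (S.biUnion T).card ≤ ∑ i ∈ S, (T i).card := Finset.card_biUnion_le
        _ = ∑ _i ∈ S, c := Finset.sum_congr rfl fun i _ => hTcard i
        _ = S.card * c := by rw [Finset.sum_const, smul_eq_mul]
    have h2 : S.card * c ≤ p * c := Nat.mul_le_mul_right c hSp
    have h3 : U.card = p * c + q := by
      rw [hUcard]
      have heq : (p+1)*c + s = p*c + (c + s) := by ring
      rw [heq]
      congr 1
      omega
    have h4 : q + (S.biUnion T).card ≤ U.card := by
      calc q + (S.biUnion T).card ≤ q + p * c := Nat.add_le_add_left (le_trans h1 h2) q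
        _ = U.card := by rw [h3, Nat.add_comm]
    calc q ≤ U.card - (S.biUnion T).card := Nat.le_sub_of_add_le h4
      _ ≤ (U \ S.biUnion T).card := Finset.le_card_sdiff _ _
  refine ⟨hmax, ?_, ?_⟩
  · intro F' hF' hne hcard
    set S : Finset (Fin (p+1)) := Finset.univ.filter (fun i => Q i ∈ F') with hSdef
    have hF'eq : F' = S.image Q := by
      ext E
      constructor
      · intro hE
        obtain ⟨i, -, rfl⟩ := Finset.mem_image.mp (hF' hE)
        exact Finset.mem_image_of_mem Q (by simp [hSdef, hE])
      · intro hE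
        obtain ⟨i, hi, rfl⟩ := Finset.mem_image.mp hE
        exact (Finset.mem_filter.mp hi).2
    have hScard : S.card ≤ p := by
      rw [hF'eq, Finset.card_image_of_injective S hQinj] at hcard
      exact hcard
    have hSne : S.Nonempty := by
      obtain ⟨E, hE⟩ := hne
      rw [hF'eq] at hE
      obtain ⟨i, hi, -⟩ := Finset.mem_image.mp hE
      exact ⟨i, hi⟩
    calc q ≤ (U \ S.biUnion T).card := hcardlow S hScard
      _ = ((U \ S.biUnion T : Finset V) : Set V).ncard := (Set.ncard_coe_finset _).symm
      _ ≤ (hCore F').ncard := by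
          rw [hF'eq]
          exact Set.ncard_le_ncard (hsubcore S hSne) (Set.toFinite _)
  · have hcoreeq : hCore (Finset.image Q Finset.univ)
        = ((U \ Finset.univ.biUnion T : Finset V) : Set V) := by
      apply Set.Subset.antisymm
      · rintro x ⟨-, hall⟩
        have hallQ : ∀ i, x ∈ Q i := fun i =>
          hall (Q i) (Finset.mem_image_of_mem Q (Finset.mem_univ i))
        have hxU : x ∈ U := by
          have hv : x ∈ (↑U ∪ Set.range w : Set V) := by rw [hcov]; trivial
          rcases hv with hxU | ⟨j, rfl⟩
          · exact hxU
          · exfalso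
            haveI : Nontrivial (Fin (p+1)) :=
              ⟨⟨⟨0, by omega⟩, ⟨1, by omega⟩, by simp [Fin.ext_iff]⟩⟩
            obtain ⟨i, hij⟩ := exists_ne j
            rcases Finset.mem_insert.mp (hallQ i) with h | h
            · exact hij (hwinj h).symm
            · exact hwU j (Finset.mem_sdiff.mp h).1
        refine Finset.mem_coe.mpr (Finset.mem_sdiff.mpr ⟨hxU, fun hB => ?_⟩)
        obtain ⟨i, -, hxTi⟩ := Finset.mem_biUnion.mp hB
        rcases Finset.mem_insert.mp (hallQ i) with h | h
        · exact hwU i (h ▸ hxU)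
        · exact (Finset.mem_sdiff.mp h).2 hxTi
      · exact hsubcore Finset.univ Finset.univ_nonempty
    rw [hcoreeq, Set.ncard_coe_finset]
    have hBU : Finset.univ.biUnion T ⊆ U := Finset.biUnion_subset.mpr fun i _ => hTU i
    have hBcard : (Finset.univ.biUnion T).card = (p+1) * c := by
      rw [Finset.card_biUnion (fun i _ j _ hij => hTdisj i j hij)]
      calc ∑ i, (T i).card = ∑ _i : Fin (p+1), c := Finset.sum_congr rfl fun i _ => hTcard i
        _ = (p+1) * c := by simp [Finset.sum_const, Finset.card_univ, mul_comm]
    rw [Finset.card_sdiff_of_subset hBU, hBcard, hUcard]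
    exact Nat.add_sub_cancel_left _ _

/-- For `s ∈ {0, …, q-1}`, no `(p+1,q,s)`-ocular graph is `(p,q)`-clique-Helly;
specifically, when `p ≥ 2` the `p+1` sets `Q_i = (U \ T_i) ∪ {w_i}` are maximal cliques
forming a `(p,q)`-intersecting family whose total intersection has exactly `s`
elements. -/
theorem stmt17 {V : Type*} [Fintype V] [DecidableEq V] (p q s : ℕ)
    (hp : 0 < p) (hq : 0 < q) (hs : s < q)
    (G : SimpleGraph V) (h : IsOcular G p q s) :
    ¬ IsHelly p q (maxCliques G) ∧
    (2 ≤ p → ∀ (U : Finset V) (T : Fin (p + 1) → Finset V) (w : Fin (p + 1) → V),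
      OcularData G p q s U T w →
        (∀ i, insert (w i) (U \ T i) ∈ maxCliques G) ∧
        IsIntersecting p q
          (Finset.image (fun i => insert (w i) (U \ T i)) Finset.univ) ∧
        (hCore (Finset.image (fun i => insert (w i) (U \ T i)) Finset.univ)).ncard
          = s) := by
  rcases h with ⟨hp1, U, T, hUuniv, hUcard, hTU, hTcard, hTdisj, hclq01, hnotext⟩ |
    ⟨hp2, U, T, w, hoc⟩
  · subst hp1
    have hmaxi : ∀ i : Fin 2, U \ T i ∈ maxCliques G := by
      intro i
      rw [mem_maxCliques']
      refine ⟨hclq01 i, fun R hR hsub => ?_⟩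
      by_contra hne
      obtain ⟨v, hvR, hvQ⟩ := Finset.exists_of_ssubset (lt_of_le_of_ne hsub hne)
      have hvU : v ∈ U := by
        have : (v : V) ∈ (↑U : Set V) := by rw [hUuniv]; trivial
        exact this
      have hvT : v ∈ T i := by
        by_contra hvT
        exact hvQ (Finset.mem_sdiff.mpr ⟨hvU, hvT⟩)
      refine hnotext i v hvT (hR.subset ?_)
      apply Set.union_subset
      · exact_mod_cast Finset.coe_subset.mpr hsub
      · simpa using hvR
    have h01 : (0 : Fin 2) ≠ 1 := by decide
    obtain ⟨x0, hx0⟩ := Finset.card_pos.mp (show 0 < (T 0).card by rw [hTcard]; omega)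
    have hx0U : x0 ∈ U := hTU 0 hx0
    have hx0T1 : x0 ∉ T 1 := fun h => Finset.disjoint_left.mp (hTdisj 0 1 h01) hx0 h
    have hneQ : U \ T 0 ≠ U \ T 1 := by
      intro hEq
      have hmem : x0 ∈ U \ T 0 := hEq ▸ Finset.mem_sdiff.mpr ⟨hx0U, hx0T1⟩
      exact (Finset.mem_sdiff.mp hmem).2 hx0
    refine ⟨fun hH => ?_, fun h2 => absurd h2 (by omega)⟩
    set F' : Finset (Finset V) := {U \ T 0, U \ T 1} with hF'
    have hsubM : F' ⊆ maxCliques G := by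
      intro E hE
      rcases Finset.mem_insert.mp hE with rfl | hE
      · exact hmaxi 0
      · rw [Finset.mem_singleton] at hE
        subst hE
        exact hmaxi 1
    have hint : IsIntersecting 1 q F' := by
      intro F'' hsub hne hcard
      obtain ⟨E, hEF⟩ := hne
      have hF''eq : F'' = {E} :=
        Finset.eq_singleton_iff_unique_mem.mpr
          ⟨hEF, fun x hx => Finset.card_le_one.mp hcard x hx E hEF⟩
      have hcoreE : hCore F'' = (↑E : Set V) := by
        rw [hF''eq]; ext x; simp [hCore]
      rw [hcoreE, Set.ncard_coe_finset]
      have hEmem : E ∈ F' := hsub hEF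
      rcases Finset.mem_insert.mp hEmem with rfl | hE1
      · rw [Finset.card_sdiff_of_subset (hTU 0), hUcard, hTcard]; omega
      · rw [Finset.mem_singleton] at hE1
        subst hE1
        rw [Finset.card_sdiff_of_subset (hTU 1), hUcard, hTcard]; omega
    have hkey := hH F' hsubM ⟨_, Finset.mem_insert_self _ _⟩ hint
    have hcoreF' : hCore F' = ((U \ (T 0 ∪ T 1) : Finset V) : Set V) := by
      ext x
      constructor
      · rintro ⟨-, hall⟩
        have h0 := hall (U \ T 0) (Finset.mem_insert_self _ _)
        have h1 := hall (U \ T 1) (Finset.mem_insert_of_mem (Finset.mem_singleton_self _))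
        rw [Finset.mem_sdiff] at h0 h1
        refine Finset.mem_coe.mpr (Finset.mem_sdiff.mpr ⟨h0.1, fun hmem => ?_⟩)
        rcases Finset.mem_union.mp hmem with h | h
        · exact h0.2 h
        · exact h1.2 h
      · intro hx
        rw [Finset.mem_coe, Finset.mem_sdiff] at hx
        have hm : ∀ E ∈ F', x ∈ E := by
          intro E hE
          have hx0' : x ∉ T 0 := fun h => hx.2 (Finset.mem_union_left _ h)
          have hx1' : x ∉ T 1 := fun h => hx.2 (Finset.mem_union_right _ h)
          rcases Finset.mem_insert.mp hE with rfl | hE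
          · exact Finset.mem_sdiff.mpr ⟨hx.1, hx0'⟩
          · rw [Finset.mem_singleton] at hE
            subst hE
            exact Finset.mem_sdiff.mpr ⟨hx.1, hx1'⟩
        exact ⟨⟨U \ T 0, Finset.mem_insert_self _ _, hm _ (Finset.mem_insert_self _ _)⟩, hm⟩
    rw [hcoreF', Set.ncard_coe_finset] at hkey
    have hTun : (T 0 ∪ T 1) ⊆ U := Finset.union_subset (hTU 0) (hTU 1)
    have hTuncard : (T 0 ∪ T 1).card = (q - s) + (q - s) := by
      rw [Finset.card_union_of_disjoint (hTdisj 0 1 h01), hTcard, hTcard]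
    rw [Finset.card_sdiff_of_subset hTun, hTuncard, hUcard] at hkey
    omega
  · obtain ⟨hA, hB, hC⟩ := ocular_aux p q s hp hs G U T w hoc
    refine ⟨fun hH => ?_, fun _ U' T' w' hoc' => ocular_aux p q s hp hs G U' T' w' hoc'⟩
    have hkey := hH (Finset.image (fun i => insert (w i) (U \ T i)) Finset.univ)
      (fun E hE => by obtain ⟨i, -, rfl⟩ := Finset.mem_image.mp hE; exact hA i)
      ⟨_, Finset.mem_image_of_mem _ (Finset.mem_univ (0 : Fin (p+1)))⟩ hB
    rw [hC] at hkey
    omega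
end

section
/- Let G be a graph and let P be a nonempty biclique of G, and let B_P denote the family of maximal bicliques of G containing P. A vertex v belongs to the intersection of all members of B_P if and only if for every vertex w with P ∪ {w} a biclique of G, the set P ∪ {v,w} is also a biclique of G. In particular, the intersection of all members of B_P is a biclique of G containing P. -/
/-- The family of maximal bicliques of `G` containing the set `P`. -/
def maxBicliquesOver {V : Type*} (G : SimpleGraph V) (P : Set V) : Set (Set V) :=
  {B : Set V | IsBiclique G B ∧ (∀ C, IsBiclique G C → B ⊆ C → B = C) ∧ P ⊆ B}

section

variable {V : Type*} {G : SimpleGraph V} {s t B P : Set V} {p v : V}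

lemma IsBiclique.mono (h : IsBiclique G s) (hts : t ⊆ s) : IsBiclique G t := by
  obtain ⟨X, Y, hXY, hdisj, hX, hY, hadj⟩ := h
  refine ⟨X ∩ t, Y ∩ t, ?_, hdisj.mono Set.inter_subset_left Set.inter_subset_left,
    fun a ha b hb => hX a ha.1 b hb.1, fun a ha b hb => hY a ha.1 b hb.1,
    fun a ha b hb => hadj a ha.1 b hb.1⟩
  rw [← Set.union_inter_distrib_right, hXY, Set.inter_eq_self_of_subset_right hts]

lemma isBiclique_iff_adj_iff_xor (hp : p ∈ s) :
    IsBiclique G s ↔ ∀ a ∈ s, ∀ b ∈ s, G.Adj a b ↔ Xor (G.Adj a p) (G.Adj b p) := by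
  constructor
  · rintro ⟨X, Y, hXY, hdisj, hX, hY, hadj⟩
    have side : ∀ x ∈ s, x ∈ X ∧ x ∉ Y ∨ x ∈ Y ∧ x ∉ X := fun x hx => by
      rcases (hXY ▸ hx : x ∈ X ∪ Y) with h | h
      exacts [.inl ⟨h, hdisj.notMem_of_mem_left h⟩, .inr ⟨h, hdisj.notMem_of_mem_right h⟩]
    have adj_iff : ∀ a ∈ s, ∀ b ∈ s, G.Adj a b ↔ ¬ (a ∈ X ↔ b ∈ X) := by
      intro a ha b hb
      rcases side a ha with ⟨haX, -⟩ | ⟨haY, haX⟩ <;>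
        rcases side b hb with ⟨hbX, -⟩ | ⟨hbY, hbX⟩
      · simpa [haX, hbX] using hX a haX b hbX
      · simpa [haX, hbX] using hadj a haX b hbY
      · simpa [haX, hbX] using (hadj b hbX a haY).symm
      · simpa [haX, hbX] using hY a haY b hbY
    intro a ha b hb
    rw [adj_iff a ha b hb, adj_iff a ha p hp, adj_iff b hb p hp, xor_iff_not_iff]
    tauto
  · intro h
    refine ⟨{a ∈ s | ¬ G.Adj a p}, {a ∈ s | G.Adj a p}, ?_, ?_, ?_, ?_, ?_⟩
    · ext x
      simp only [Set.mem_union, Set.mem_ofPred_eq]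
      tauto
    · exact Set.disjoint_left.2 fun x hx hx' => hx.2 hx'.2
    all_goals
      intro a ha b hb
      rw [h a ha.1 b hb.1, xor_iff_not_iff]
      have := ha.2
      have := hb.2
      tauto

lemma IsBiclique.insert (hs : IsBiclique G s) (hp : p ∈ s)
    (hv : ∀ w ∈ s, G.Adj v w ↔ Xor (G.Adj v p) (G.Adj w p)) :
    IsBiclique G (insert v s) := by
  rw [isBiclique_iff_adj_iff_xor hp] at hs
  rw [isBiclique_iff_adj_iff_xor (Set.mem_insert_of_mem v hp)]
  rintro a (rfl | ha) b (rfl | hb)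
  · simp
  · exact hv b hb
  · rw [G.adj_comm, hv a ha, _root_.xor_comm]
  · exact hs a ha b hb

lemma exists_mem_maxBicliquesOver [Finite V] (hs : IsBiclique G s) :
    (maxBicliquesOver G s).Nonempty := by
  obtain ⟨B, ⟨hB, hsB⟩, hmax⟩ :=
    (Set.toFinite {C | IsBiclique G C ∧ s ⊆ C}).exists_maximal ⟨s, hs, subset_rfl⟩
  exact ⟨B, hB, fun C hC hBC => le_antisymm hBC (hmax ⟨hC, hsB.trans hBC⟩ hBC), hsB⟩

lemma maxBicliquesOver_anti (hts : t ⊆ s) : maxBicliquesOver G s ⊆ maxBicliquesOver G t :=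
  fun _ ⟨hB, hmax, hsB⟩ => ⟨hB, hmax, hts.trans hsB⟩

lemma mem_of_mem_maxBicliquesOver (hB : B ∈ maxBicliquesOver G P) (hp : p ∈ P)
    (hv : ∀ w, IsBiclique G (P ∪ {w}) → IsBiclique G (P ∪ {v, w})) : v ∈ B := by
  obtain ⟨hBbic, hmax, hPB⟩ := hB
  have compatible : ∀ w ∈ B, G.Adj v w ↔ Xor (G.Adj v p) (G.Adj w p) := fun w hw =>
    (isBiclique_iff_adj_iff_xor (Set.mem_union_left _ hp)).1
      (hv w (hBbic.mono (Set.union_subset hPB (Set.singleton_subset_iff.2 hw))))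
      v (by simp) w (by simp)
  rw [hmax _ (hBbic.insert (hPB hp) compatible) (Set.subset_insert v B)]
  exact Set.mem_insert v B

end

/-- Let `P` be a nonempty biclique of `G`.  A vertex `v` belongs to the intersection of
all maximal bicliques of `G` containing `P` iff for every vertex `w` with `P ∪ {w}` a
biclique, the set `P ∪ {v, w}` is also a biclique.  In particular, this intersection is
a biclique of `G` containing `P`. -/
theorem stmt18 {V : Type*} [Fintype V] (G : SimpleGraph V) (P : Set V)
    (hne : P.Nonempty) (hP : IsBiclique G P) :
    (∀ v : V, v ∈ ⋂ B ∈ maxBicliquesOver G P, B ↔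
      ∀ w : V, IsBiclique G (P ∪ {w}) → IsBiclique G (P ∪ {v, w})) ∧
    IsBiclique G (⋂ B ∈ maxBicliquesOver G P, B) ∧
    P ⊆ ⋂ B ∈ maxBicliquesOver G P, B := by
  obtain ⟨p, hp⟩ := hne
  obtain ⟨B₀, hB₀⟩ := exists_mem_maxBicliquesOver hP
  refine ⟨fun v => ⟨fun hv w hw => ?_, fun hv => ?_⟩,
    hB₀.1.mono (Set.biInter_subset_of_mem hB₀),
    Set.subset_iInter₂ fun B hB => hB.2.2⟩
  · obtain ⟨B, hB⟩ := exists_mem_maxBicliquesOver hw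
    have hBP : B ∈ maxBicliquesOver G P := maxBicliquesOver_anti Set.subset_union_left hB
    have hvB : v ∈ B := Set.mem_iInter₂.1 hv B hBP
    have hwB : w ∈ B := hB.2.2 (Set.mem_union_right _ rfl)
    exact hB.1.mono (Set.union_subset hBP.2.2 (Set.insert_subset hvB
      (Set.singleton_subset_iff.2 hwB)))
  · exact Set.mem_iInter₂.2 fun B hB => mem_of_mem_maxBicliquesOver hB hp hv
end

section
/- For (p,q) equal to (1,1), (1,2), or (2,1), a graph G is (p,q)-biclique-Helly if and only if G is a complete bipartite graph. -/
open Classical in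
noncomputable def maxBicliques {V : Type*} [Fintype V] (G : SimpleGraph V) :
    Finset (Finset V) :=
  Finset.univ.filter fun B : Finset V =>
    IsBiclique G (B : Set V) ∧
      ∀ C : Finset V, IsBiclique G (C : Set V) → B ⊆ C → B = C

section Aux

variable {V : Type*} [Fintype V] [DecidableEq V] (G : SimpleGraph V)

lemma biclique_pair (a b : V) : IsBiclique G (↑({a, b} : Finset V) : Set V) := by
  have hco : (↑({a, b} : Finset V) : Set V) = ({a, b} : Set V) := by simp
  rw [hco]
  by_cases hab : G.Adj a b
  · refine ⟨{a}, {b}, by simp [Set.singleton_union, Set.pair_comm], ?_, ?_, ?_, ?_⟩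
    · simp [Set.disjoint_singleton, hab.ne]
    · rintro u rfl v rfl; exact G.irrefl
    · rintro u rfl v rfl; exact G.irrefl
    · rintro u rfl v rfl; exact hab
  · refine ⟨{a, b}, ∅, by simp, by simp, ?_, by simp, by simp⟩
    rintro u (rfl | rfl) v (rfl | rfl)
    · exact G.irrefl
    · exact hab
    · exact fun h => hab h.symm
    · exact G.irrefl

lemma mem_maxBicliques {B : Finset V} (h : B ∈ maxBicliques G) :
    IsBiclique G (B : Set V) := by
  classical
  simp only [maxBicliques, Finset.mem_filter] at h
  exact h.2.1

lemma exists_maxBiclique (S : Finset V) (hS : IsBiclique G (S : Set V)) :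
    ∃ B ∈ maxBicliques G, S ⊆ B := by
  classical
  set 𝒮 : Finset (Finset V) :=
    Finset.univ.filter (fun B => IsBiclique G (B : Set V) ∧ S ⊆ B) with h𝒮
  have hSmem : S ∈ 𝒮 := by simp [h𝒮, hS]
  obtain ⟨B, hB, hmax⟩ := Finset.exists_max_image 𝒮 Finset.card ⟨S, hSmem⟩
  simp only [h𝒮, Finset.mem_filter, Finset.mem_univ, true_and] at hB hmax
  refine ⟨B, ?_, hB.2⟩
  simp only [maxBicliques, Finset.mem_filter, Finset.mem_univ, true_and]
  refine ⟨hB.1, fun C hC hBC => ?_⟩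
  exact Finset.eq_of_subset_of_card_le hBC (hmax C ⟨hC, hB.2.trans hBC⟩)

lemma edge_iff {s : Set V} (hs : IsBiclique G s) {a b x : V}
    (ha : a ∈ s) (hb : b ∈ s) (hx : x ∈ s) (hab : G.Adj a b) :
    (G.Adj x a ↔ ¬ G.Adj x b) := by
  obtain ⟨X, Y, hXY, hdisj, hX, hY, hXYadj⟩ := hs
  rw [← hXY] at ha hb hx
  rcases ha with ha | ha <;> rcases hb with hb | hb
  · exact absurd hab (hX a ha b hb)
  · rcases hx with hx | hx
    · simp [hX x hx a ha, hXYadj x hx b hb]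
    · simp [(hXYadj a ha x hx).symm, hY x hx b hb]
  · rcases hx with hx | hx
    · simp [hXYadj x hx a ha, hX x hx b hb]
    · simp [hY x hx a ha, (hXYadj b hb x hx).symm]
  · exact absurd hab (hY a ha b hb)

lemma nonedge_iff {s : Set V} (hs : IsBiclique G s) {a b x : V}
    (ha : a ∈ s) (hb : b ∈ s) (hx : x ∈ s) (hab : ¬ G.Adj a b) :
    (G.Adj x a ↔ G.Adj x b) := by
  obtain ⟨X, Y, hXY, hdisj, hX, hY, hXYadj⟩ := hs
  rw [← hXY] at ha hb hx
  rcases ha with ha | ha <;> rcases hb with hb | hb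
  · rcases hx with hx | hx
    · simp [hX x hx a ha, hX x hx b hb]
    · simp [(hXYadj a ha x hx).symm, (hXYadj b hb x hx).symm]
  · exact absurd (hXYadj a ha b hb) hab
  · exact absurd (hXYadj b hb a ha).symm hab
  · rcases hx with hx | hx
    · simp [hXYadj x hx a ha, hXYadj x hx b hb]
    · simp [hY x hx a ha, hY x hx b hb]

lemma hCore_singleton_s19 (B : Finset V) : hCore ({B} : Finset (Finset V)) = ↑B := by
  ext x; simp [hCore]

lemma hCore_pair (B C : Finset V) :
    hCore ({B, C} : Finset (Finset V)) = (↑B : Set V) ∩ ↑C := by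
  ext x
  simp only [hCore, Finset.mem_insert, Finset.mem_singleton, Set.mem_setOf_eq,
    Set.mem_inter_iff, Finset.mem_coe]
  constructor
  · rintro ⟨-, h⟩; exact ⟨h B (Or.inl rfl), h C (Or.inr rfl)⟩
  · rintro ⟨h1, h2⟩
    exact ⟨⟨B, Or.inl rfl, h1⟩, by rintro E (rfl | rfl) <;> assumption⟩

lemma intersecting_of (F' : Finset (Finset V))
    (h2 : ∀ B ∈ F', 2 ≤ B.card)
    (hpw : ∀ B ∈ F', ∀ C ∈ F', ((↑B : Set V) ∩ ↑C).Nonempty)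
    {p q : ℕ} (hp : p ≤ 2) (hq : q ≤ 2) (hq' : 2 ≤ p → q ≤ 1) :
    IsIntersecting p q F' := by
  intro F'' hsub hne hcard
  have h1 : 1 ≤ F''.card := hne.card_pos
  have hle2 : F''.card ≤ 2 := le_trans hcard hp
  interval_cases h : F''.card
  · obtain ⟨B, rfl⟩ := Finset.card_eq_one.mp h
    rw [hCore_singleton_s19, Set.ncard_coe_finset]
    exact le_trans hq (h2 B (hsub (Finset.mem_singleton_self B)))
  · obtain ⟨B, C, hBC, rfl⟩ := Finset.card_eq_two.mp h
    have hB : B ∈ F' := hsub (by simp)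
    have hC : C ∈ F' := hsub (by simp)
    have hfin : ((↑B : Set V) ∩ ↑C).Finite := (B.finite_toSet).inter_of_left _
    have hpos : 0 < ((↑B : Set V) ∩ ↑C).ncard :=
      (Set.ncard_pos hfin).mpr (hpw B hB C hC)
    have hq1 : q ≤ 1 := hq' (by omega)
    rw [hCore_pair]
    omega

end Aux

/-- For `(p,q)` equal to `(1,1)`, `(1,2)` or `(2,1)`, a graph `G` is
`(p,q)`-biclique-Helly iff `G` is a complete bipartite graph. -/
theorem stmt19 {V : Type*} [Fintype V] [DecidableEq V] (p q : ℕ)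
    (hpq : (p, q) = (1, 1) ∨ (p, q) = (1, 2) ∨ (p, q) = (2, 1))
    (G : SimpleGraph V) :
    IsHelly p q (maxBicliques G) ↔ IsBiclique G (Set.univ : Set V) := by
  simp only [Prod.mk.injEq] at hpq
  have hp1 : 1 ≤ p := by omega
  have hq1 : 1 ≤ q := by omega
  have hp2 : p ≤ 2 := by omega
  have hq2 : q ≤ 2 := by omega
  have hq' : 2 ≤ p → q ≤ 1 := by omega
  constructor
  · intro hH
    -- common vertex of three pairwise-intersecting maximal bicliques
    have key : ∀ B1 B2 B3 : Finset V,
        B1 ∈ maxBicliques G → B2 ∈ maxBicliques G → B3 ∈ maxBicliques G →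
        2 ≤ B1.card → 2 ≤ B2.card → 2 ≤ B3.card →
        ((B1 : Set V) ∩ ↑B2).Nonempty → ((B1 : Set V) ∩ ↑B3).Nonempty →
        ((B2 : Set V) ∩ ↑B3).Nonempty →
        ∃ x, x ∈ B1 ∧ x ∈ B2 ∧ x ∈ B3 := by
      intro B1 B2 B3 m1 m2 m3 c1 c2 c3 i12 i13 i23
      have sym : ∀ {s t : Set V}, (s ∩ t).Nonempty → (t ∩ s).Nonempty := by
        intro s t h; rwa [Set.inter_comm]
      set F' : Finset (Finset V) := {B1, B2, B3} with hF'
      have hsub : F' ⊆ maxBicliques G := by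
        intro B hB
        simp only [hF', Finset.mem_insert, Finset.mem_singleton] at hB
        rcases hB with rfl | rfl | rfl <;> assumption
      have diag : ∀ B : Finset V, 2 ≤ B.card → ((B : Set V) ∩ ↑B).Nonempty := by
        intro B hB
        have hBne : B.Nonempty := Finset.card_pos.mp (by omega)
        obtain ⟨v, hv⟩ := hBne
        exact ⟨v, hv, hv⟩
      have hint : IsIntersecting p q F' := by
        refine intersecting_of F' ?_ ?_ hp2 hq2 hq'
        · intro B hB
          simp only [hF', Finset.mem_insert, Finset.mem_singleton] at hB
          rcases hB with rfl | rfl | rfl <;> assumption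
        · intro B hB C hC
          simp only [hF', Finset.mem_insert, Finset.mem_singleton] at hB hC
          rcases hB with rfl | rfl | rfl <;> rcases hC with rfl | rfl | rfl
          · exact diag _ c1
          · exact i12
          · exact i13
          · exact sym i12
          · exact diag _ c2
          · exact i23
          · exact sym i13
          · exact sym i23
          · exact diag _ c3
      have hcore := hH F' hsub ⟨B1, by simp [hF']⟩ hint
      have hxne : (hCore F').Nonempty :=
        Set.nonempty_of_ncard_ne_zero (by omega)
      obtain ⟨x, hx⟩ := hxne
      exact ⟨x, hx.2 B1 (by simp [hF']), hx.2 B2 (by simp [hF']),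
        hx.2 B3 (by simp [hF'])⟩
    -- no triangles
    have hT : ∀ a b c : V, G.Adj a b → G.Adj b c → ¬ G.Adj a c := by
      intro a b c hab hbc hac
      obtain ⟨B1, m1, s1⟩ := exists_maxBiclique G {a, b} (biclique_pair G a b)
      obtain ⟨B2, m2, s2⟩ := exists_maxBiclique G {b, c} (biclique_pair G b c)
      obtain ⟨B3, m3, s3⟩ := exists_maxBiclique G {a, c} (biclique_pair G a c)
      have c1 : 2 ≤ B1.card := by
        calc 2 = ({a, b} : Finset V).card := (Finset.card_pair hab.ne).symm
        _ ≤ B1.card := Finset.card_le_card s1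
      have c2 : 2 ≤ B2.card := by
        calc 2 = ({b, c} : Finset V).card := (Finset.card_pair hbc.ne).symm
        _ ≤ B2.card := Finset.card_le_card s2
      have c3 : 2 ≤ B3.card := by
        calc 2 = ({a, c} : Finset V).card := (Finset.card_pair hac.ne).symm
        _ ≤ B3.card := Finset.card_le_card s3
      obtain ⟨x, x1, x2, x3⟩ := key B1 B2 B3 m1 m2 m3 c1 c2 c3
        ⟨b, s1 (by simp), s2 (by simp)⟩
        ⟨a, s1 (by simp), s3 (by simp)⟩
        ⟨c, s2 (by simp), s3 (by simp)⟩
      have e1 := edge_iff G (mem_maxBicliques G m1)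
        (Finset.mem_coe.mpr (s1 (by simp))) (Finset.mem_coe.mpr (s1 (by simp)))
        (Finset.mem_coe.mpr x1) hab
      have e2 := edge_iff G (mem_maxBicliques G m2)
        (Finset.mem_coe.mpr (s2 (by simp))) (Finset.mem_coe.mpr (s2 (by simp)))
        (Finset.mem_coe.mpr x2) hbc
      have e3 := edge_iff G (mem_maxBicliques G m3)
        (Finset.mem_coe.mpr (s3 (by simp))) (Finset.mem_coe.mpr (s3 (by simp)))
        (Finset.mem_coe.mpr x3) hac
      tauto
    -- every vertex is adjacent to an endpoint of every edge
    have hP : ∀ a b c : V, G.Adj a b → G.Adj a c ∨ G.Adj b c := by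
      intro a b c hab
      by_contra hcon
      push_neg at hcon
      obtain ⟨hac, hbc⟩ := hcon
      have hacne : a ≠ c := by rintro rfl; exact hbc hab.symm
      have hbcne : b ≠ c := by rintro rfl; exact hac hab
      obtain ⟨B1, m1, s1⟩ := exists_maxBiclique G {a, b} (biclique_pair G a b)
      obtain ⟨B2, m2, s2⟩ := exists_maxBiclique G {a, c} (biclique_pair G a c)
      obtain ⟨B3, m3, s3⟩ := exists_maxBiclique G {b, c} (biclique_pair G b c)
      have c1 : 2 ≤ B1.card := by
        calc 2 = ({a, b} : Finset V).card := (Finset.card_pair hab.ne).symm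
        _ ≤ B1.card := Finset.card_le_card s1
      have c2 : 2 ≤ B2.card := by
        calc 2 = ({a, c} : Finset V).card := (Finset.card_pair hacne).symm
        _ ≤ B2.card := Finset.card_le_card s2
      have c3 : 2 ≤ B3.card := by
        calc 2 = ({b, c} : Finset V).card := (Finset.card_pair hbcne).symm
        _ ≤ B3.card := Finset.card_le_card s3
      obtain ⟨x, x1, x2, x3⟩ := key B1 B2 B3 m1 m2 m3 c1 c2 c3
        ⟨a, s1 (by simp), s2 (by simp)⟩
        ⟨b, s1 (by simp), s3 (by simp)⟩
        ⟨c, s2 (by simp), s3 (by simp)⟩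
      have e1 := edge_iff G (mem_maxBicliques G m1)
        (Finset.mem_coe.mpr (s1 (by simp))) (Finset.mem_coe.mpr (s1 (by simp)))
        (Finset.mem_coe.mpr x1) hab
      have e2 := nonedge_iff G (mem_maxBicliques G m2)
        (Finset.mem_coe.mpr (s2 (by simp))) (Finset.mem_coe.mpr (s2 (by simp)))
        (Finset.mem_coe.mpr x2) hac
      have e3 := nonedge_iff G (mem_maxBicliques G m3)
        (Finset.mem_coe.mpr (s3 (by simp))) (Finset.mem_coe.mpr (s3 (by simp)))
        (Finset.mem_coe.mpr x3) hbc
      tauto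
    -- construct the bipartition
    by_cases hE : ∃ a b : V, G.Adj a b
    · obtain ⟨a, b, hab⟩ := hE
      refine ⟨{v | G.Adj v b}, {v | G.Adj v a}, ?_, ?_, ?_, ?_, ?_⟩
      · ext v
        simp only [Set.mem_union, Set.mem_setOf_eq, Set.mem_univ, iff_true]
        rcases hP a b v hab with h | h
        · exact Or.inr h.symm
        · exact Or.inl h.symm
      · rw [Set.disjoint_left]
        intro v hv1 hv2
        exact hT a b v hab hv1.symm hv2.symm
      · intro u hu v hv h
        exact hT b u v hu.symm h hv.symm
      · intro u hu v hv h
        exact hT a u v hu.symm h hv.symm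
      · intro u hu v hv
        rcases hP u b v hu with h | h
        · exact h
        · exact absurd hv.symm (hT a b v hab h)
    · push_neg at hE
      exact ⟨Set.univ, ∅, by simp, by simp, fun a _ b _ => hE a b, by simp,
        by simp⟩
  · intro hCB F' hsub hne hint
    have huniv : ∀ B ∈ maxBicliques G, B = Finset.univ := by
      intro B hB
      classical
      simp only [maxBicliques, Finset.mem_filter] at hB
      exact hB.2.2 Finset.univ (by rw [Finset.coe_univ]; exact hCB)
        (Finset.subset_univ B)
    have hsub' : F' ⊆ {Finset.univ} := by
      intro B hB
      simp [huniv B (hsub hB)]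
    have hcard : F'.card ≤ 1 :=
      le_trans (Finset.card_le_card hsub') (by simp)
    exact hint F' (subset_refl _) hne (le_trans hcard hp1)
end
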